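/- arXiv:2304.06892 — 3 statements merged into one kernel-verified Lean document; each statement's English description precedes it below -/
import Mathlib

section
/- Let β ∈ (1,2] be such that for every Farey word s ∈ F^*, it is NOT the case that L(s)^∞ ≺ α(β) ≺ L(s)^+ s^∞ (i.e., β lies in the closure Ē). Then the sequence α(β) is balanced. -/
open scoped Classical ENNReal
open MeasureTheory Filter

noncomputable section

/-- The β-transformation `x ↦ βx (mod 1)` on `[0,1)`. -/
def Tbeta (β : ℝ) (x : ℝ) : ℝ := Int.fract (β * x)

/-- The survivor set `K_β(t)`. -/
def Kset (β t : ℝ) : Set ℝ :=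
  {x | x ∈ Set.Ico (0 : ℝ) 1 ∧ ∀ n : ℕ, t ≤ (Tbeta β)^[n] x}

/-- The bifurcation set `𝓔_β`. -/
def Eset (β : ℝ) : Set ℝ :=
  {t | t ∈ Set.Ico (0 : ℝ) 1 ∧ ∀ t' ∈ Set.Ioo t 1, Kset β t' ≠ Kset β t}

/-- The dimension bifurcation set `𝓑_β`. -/
def Bset (β : ℝ) : Set ℝ :=
  {t | t ∈ Set.Ico (0 : ℝ) 1 ∧ ∀ t' ∈ Set.Ioo t 1, dimH (Kset β t') < dimH (Kset β t)}

/-- The critical value `τ(β) = min{t ∈ (0,1) : dim_H K_β(t) = 0}`. -/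
def tau (β : ℝ) : ℝ := sInf {t | t ∈ Set.Ioo (0 : ℝ) 1 ∧ dimH (Kset β t) = 0}

/-- Strict lexicographic order on sequences. -/
def seqLt (a b : ℕ → ℕ) : Prop := ∃ n, (∀ i < n, a i = b i) ∧ a n < b n

/-- Lexicographic order on sequences. -/
def seqLe (a b : ℕ → ℕ) : Prop := seqLt a b ∨ a = b

/-- The left shift map `σ`. -/
def shift (a : ℕ → ℕ) : ℕ → ℕ := fun n => a (n + 1)

/-- Prepend a digit to a sequence. -/
def consSeq (c : ℕ) (a : ℕ → ℕ) : ℕ → ℕ := fun n => if n = 0 then c else a (n - 1)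

/-- The projection `π_β`. -/
def piBeta (β : ℝ) (a : ℕ → ℕ) : ℝ := ∑' i : ℕ, (a i : ℝ) / β ^ (i + 1)

/-- `a` is the quasi-greedy expansion of `1` in base `β`: a `{0,1}`-sequence with
`π_β(a) = 1` and `0^∞ ≺ σ^n(a) ≼ a` for all `n ≥ 1`. -/
def IsQuasiGreedy (β : ℝ) (a : ℕ → ℕ) : Prop :=
  (∀ i, a i ≤ 1) ∧ piBeta β a = 1 ∧
    ∀ n : ℕ, 1 ≤ n → seqLt (fun _ => 0) (shift^[n] a) ∧ seqLe (shift^[n] a) a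

/-- The periodic sequence `w^∞`. -/
def periodic (w : List ℕ) : ℕ → ℕ := fun n => w.getD (n % w.length) 0

/-- The word `w` followed by the sequence `a`. -/
def wordThen (w : List ℕ) (a : ℕ → ℕ) : ℕ → ℕ :=
  fun n => if n < w.length then w.getD n 0 else a (n - w.length)

/-- The sequence `w0^∞`. -/
def wordZero (w : List ℕ) : ℕ → ℕ := wordThen w (fun _ => 0)

/-- `w^-`: change the last letter of `w` to `0`. -/
def wordMinus (w : List ℕ) : List ℕ := w.dropLast ++ [0]

/-- `w^+`: change the last letter of `w` to `1`. -/
def wordPlus (w : List ℕ) : List ℕ := w.dropLast ++ [1]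

/-- The word `a_1 ⋯ a_m` (first `m` digits of the sequence `a`). -/
def prefixWord (a : ℕ → ℕ) (m : ℕ) : List ℕ := (List.range m).map a

/-- A Lyndon word: a `{0,1}`-word of length at least `2` which is lexicographically
strictly smaller than every nontrivial cyclic rotation of itself. -/
def IsLyndon (w : List ℕ) : Prop :=
  2 ≤ w.length ∧ (∀ c ∈ w, c ≤ 1) ∧
    ∀ k, 0 < k → k < w.length → List.Lex (· < ·) w (w.rotate k)

/-- A `β`-Lyndon word (with respect to the quasi-greedy expansion `a = α(β)`):
a Lyndon word with `σ^n(w^∞) ≺ α(β)` for all `n ≥ 0`. -/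
def IsBetaLyndon (a : ℕ → ℕ) (w : List ℕ) : Prop :=
  IsLyndon w ∧ ∀ n : ℕ, seqLt (shift^[n] (periodic w)) a

/-- The block of the substitution `U_0 : 0 ↦ 0, 1 ↦ 01`. -/
def substBlock0 (c : ℕ) : List ℕ := if c = 0 then [0] else [0, 1]

/-- The block of the substitution `U_1 : 0 ↦ 01, 1 ↦ 1`. -/
def substBlock1 (c : ℕ) : List ℕ := if c = 0 then [0, 1] else [1]

/-- Apply a letterwise substitution to a finite word. -/
def substWord (f : ℕ → List ℕ) (w : List ℕ) : List ℕ := (w.map f).flatten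

def U0word : List ℕ → List ℕ := substWord substBlock0
def U1word : List ℕ → List ℕ := substWord substBlock1

/-- Apply a letterwise substitution (with nonempty blocks) to an infinite sequence. -/
def substSeq (f : ℕ → List ℕ) (a : ℕ → ℕ) : ℕ → ℕ :=
  fun n => (((List.range (n + 1)).map fun i => f (a i)).flatten).getD n 0

def U0seq : (ℕ → ℕ) → ℕ → ℕ := substSeq substBlock0
def U1seq : (ℕ → ℕ) → ℕ → ℕ := substSeq substBlock1

/-- Farey words of length at least 2: the smallest set of words containing `01`
and closed under `U_0` and `U_1`. -/
inductive IsFarey : List ℕ → Prop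
  | base : IsFarey [0, 1]
  | u0 {w : List ℕ} : IsFarey w → IsFarey (U0word w)
  | u1 {w : List ℕ} : IsFarey w → IsFarey (U1word w)

/-- `L(w)`: the lexicographically largest cyclic rotation of `w`. -/
def maxRot (w : List ℕ) : List ℕ :=
  ((List.range w.length).map (w.rotate ·)).foldl
    (fun acc r => if List.Lex (· < ·) acc r then r else acc) w

/-- A sequence is balanced if any two factors of equal length have numbers of `1`s
differing by at most `1`. -/
def BalancedSeq (a : ℕ → ℕ) : Prop :=
  ∀ i₁ i₂ n : ℕ, (∑ j ∈ Finset.range n, a (i₁ + j)) ≤ (∑ j ∈ Finset.range n, a (i₂ + j)) + 1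

/-- A sequence is eventually periodic. -/
def EventuallyPeriodic (a : ℕ → ℕ) : Prop :=
  ∃ m p : ℕ, 1 ≤ p ∧ shift^[m + p] a = shift^[m] a

/-- A Sturmian sequence: balanced and not eventually periodic. -/
def Sturmian (a : ℕ → ℕ) : Prop := BalancedSeq a ∧ ¬ EventuallyPeriodic a

/-- The subshift `K̃_β(w) = {z : w^∞ ≼ σ^n(z) ≼ α(β) ∀ n ≥ 0}`, where `a = α(β)`. -/
def Ktilde (a : ℕ → ℕ) (w : List ℕ) : Set (ℕ → ℕ) :=
  {z | (∀ i, z i ≤ 1) ∧ ∀ n : ℕ, seqLe (periodic w) (shift^[n] z) ∧ seqLe (shift^[n] z) a}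

/-- A finite word `u` occurs as a factor of a sequence `z`. -/
def FactorOf (u : List ℕ) (z : ℕ → ℕ) : Prop :=
  ∃ i, ∀ j < u.length, u.getD j 0 = z (i + j)

/-- A set of sequences is transitive: any word of its language can be connected
to any of its elements. -/
def SubshiftTransitive (X : Set (ℕ → ℕ)) : Prop :=
  ∀ u : List ℕ, (∃ z ∈ X, FactorOf u z) → ∀ z ∈ X, ∃ v : List ℕ, wordThen (u ++ v) z ∈ X

/-- `β ∈ Ē`: for no Farey word `s` does `L(s)^∞ ≺ α(β) ≺ L(s)^+ s^∞` hold. -/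
def InEbar (a : ℕ → ℕ) : Prop :=
  ∀ s : List ℕ, IsFarey s →
    ¬ (seqLt (periodic (maxRot s)) a ∧ seqLt a (wordThen (wordPlus (maxRot s)) (periodic s)))

/-- `β ∈ E_L`: for no Farey word `s` does `L(s)^∞ ≺ α(β) ≼ L(s)^+ s^∞` hold. -/
def InEL (a : ℕ → ℕ) : Prop :=
  ∀ s : List ℕ, IsFarey s →
    ¬ (seqLt (periodic (maxRot s)) a ∧ seqLe a (wordThen (wordPlus (maxRot s)) (periodic s)))

/-- `β ∈ E`: for no Farey word `s` does `L(s)^∞ ≼ α(β) ≼ L(s)^+ s^∞` hold. -/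
def InE (a : ℕ → ℕ) : Prop :=
  ∀ s : List ℕ, IsFarey s →
    ¬ (seqLe (periodic (maxRot s)) a ∧ seqLe a (wordThen (wordPlus (maxRot s)) (periodic s)))

/-- `m(w) = min{n ≥ 1 : σ^n(α(β)) ≼ w^∞}` (where `a = α(β)`). -/
def ebliCutoff (a : ℕ → ℕ) (w : List ℕ) : ℕ :=
  sInf {n | 1 ≤ n ∧ seqLe (shift^[n] a) (periodic w)}

/-- The extended `β`-Lyndon interval generated by a `β`-Lyndon word `w`
(where `a = α(β)`). -/
def EBLI (β : ℝ) (a : ℕ → ℕ) (w : List ℕ) : Set ℝ :=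
  if ∃ n : ℕ, 1 ≤ n ∧ seqLe (shift^[n] a) (periodic w) then
    Set.Icc
      (piBeta β (wordThen (wordMinus w) (periodic (wordMinus (prefixWord a (ebliCutoff a w))))))
      (piBeta β (periodic w))
  else
    Set.Icc (piBeta β (wordZero w)) (piBeta β (periodic w))

/-- A plateau of `f`: a maximal nondegenerate subinterval of `[0,1)` on which `f`
is constant. -/
def IsPlateau (f : ℝ → ℝ≥0∞) (P : Set ℝ) : Prop :=
  P ⊆ Set.Ico 0 1 ∧ P.OrdConnected ∧ (∃ x ∈ P, ∃ y ∈ P, x < y) ∧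
    (∀ x ∈ P, ∀ y ∈ P, f x = f y) ∧
    ∀ Q : Set ℝ, Q ⊆ Set.Ico 0 1 → Q.OrdConnected →
      (∀ x ∈ Q, ∀ y ∈ Q, f x = f y) → P ⊆ Q → Q = P

/-! ### Part A: lexicographic order on sequences -/

lemma seqLt_or_gt_of_ne {a b : ℕ → ℕ} (h : a ≠ b) : seqLt a b ∨ seqLt b a := by
  have hne : ∃ n, a n ≠ b n := by
    by_contra h'; push_neg at h'; exact h (funext h')
  have hspec : a (Nat.find hne) ≠ b (Nat.find hne) := Nat.find_spec hne
  have hmin : ∀ i < Nat.find hne, a i = b i := fun i hi =>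
    not_not.mp (Nat.find_min hne hi)
  rcases lt_or_gt_of_ne hspec with h1 | h1
  · exact Or.inl ⟨Nat.find hne, hmin, h1⟩
  · exact Or.inr ⟨Nat.find hne, fun i hi => (hmin i hi).symm, h1⟩

lemma seqLe_of_not_seqLt {a b : ℕ → ℕ} (h : ¬ seqLt a b) : seqLe b a := by
  by_cases he : a = b
  · exact Or.inr he.symm
  · rcases seqLt_or_gt_of_ne he with h1 | h1
    · exact absurd h1 h
    · exact Or.inl h1

lemma seq_squeeze {x a y : ℕ → ℕ} (h1 : seqLe x a) (h2 : seqLe a y) {N : ℕ}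
    (h : ∀ i < N, x i = y i) : ∀ i < N, a i = y i := by
  intro i
  induction i using Nat.strong_induction_on with
  | _ i IH =>
    intro hiN
    rcases h2 with h2 | h2
    · obtain ⟨n, hag, hlt⟩ := h2
      rcases lt_trichotomy i n with hc | hc | hc
      · exact hag i hc
      · subst hc
        rcases h1 with h1 | h1
        · obtain ⟨m, mag, mlt⟩ := h1
          rcases lt_trichotomy m i with hm | hm | hm
          · have e1 : a m = y m := IH m hm (hm.trans hiN)
            have e2 : x m = y m := h m (hm.trans hiN)
            omega
          · subst hm
            have e2 : x m = y m := h m hiN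
            omega
          · have e1 : x i = a i := mag i hm
            have e2 : x i = y i := h i hiN
            omega
        · subst h1
          have e2 : x i = y i := h i hiN
          omega
      · have := IH n hc (hc.trans hiN)
        omega
    · subst h2; rfl

lemma shift_iterate (a : ℕ → ℕ) (n : ℕ) : shift^[n] a = fun i => a (i + n) := by
  induction n with
  | zero => rfl
  | succ n ih =>
    rw [Function.iterate_succ_apply', ih]
    funext i
    simp [shift]
    ring_nf

/-- binary sequence facts -/
lemma seqLe_one_seq {a : ℕ → ℕ} (ha : ∀ i, a i ≤ 1) : seqLe a (fun _ => 1) := by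
  by_cases he : a = fun _ => 1
  · exact Or.inr he
  · rcases seqLt_or_gt_of_ne he with h1 | h1
    · exact Or.inl h1
    · obtain ⟨n, _, hlt⟩ := h1
      have h1 : (fun _ : ℕ => (1:ℕ)) n = 1 := rfl
      have := ha n
      omega

/-! ### Part B: words, substitutions, wordThen/periodic machinery -/

def psiBlock0 (c : ℕ) : List ℕ := if c = 0 then [0] else [1, 0]
def psiBlock1 (c : ℕ) : List ℕ := if c = 0 then [1, 0] else [1]
def psi0w : List ℕ → List ℕ := substWord psiBlock0
def psi1w : List ℕ → List ℕ := substWord psiBlock1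

lemma substWord_nil (f : ℕ → List ℕ) : substWord f [] = [] := rfl

lemma substWord_cons (f : ℕ → List ℕ) (c : ℕ) (w : List ℕ) :
    substWord f (c :: w) = f c ++ substWord f w := by
  simp [substWord]

lemma substWord_append (f : ℕ → List ℕ) (u v : List ℕ) :
    substWord f (u ++ v) = substWord f u ++ substWord f v := by
  simp [substWord]

lemma substWord_ne_nil {f : ℕ → List ℕ} (hf : ∀ c, f c ≠ []) {w : List ℕ}
    (hw : w ≠ []) : substWord f w ≠ [] := by
  cases w with
  | nil => exact absurd rfl hw
  | cons c w =>
    rw [substWord_cons]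
    intro h
    rcases List.append_eq_nil_iff.mp h with ⟨h1, _⟩
    exact hf c h1

lemma psiBlock0_ne_nil (c : ℕ) : psiBlock0 c ≠ [] := by
  unfold psiBlock0; split <;> simp

lemma psiBlock1_ne_nil (c : ℕ) : psiBlock1 c ≠ [] := by
  unfold psiBlock1; split <;> simp

lemma substBlock0_ne_nil (c : ℕ) : substBlock0 c ≠ [] := by
  unfold substBlock0; split <;> simp

lemma substBlock1_ne_nil (c : ℕ) : substBlock1 c ≠ [] := by
  unfold substBlock1; split <;> simp

/-- key word identity: `U0(z) ++ [0] = [0] ++ ψ0(z)` -/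
lemma U0_id (z : List ℕ) : U0word z ++ [0] = [0] ++ psi0w z := by
  induction z with
  | nil => rfl
  | cons c z ih =>
    show substWord substBlock0 (c :: z) ++ [0] = [0] ++ substWord psiBlock0 (c :: z)
    rw [substWord_cons, substWord_cons, List.append_assoc]
    rw [show substWord substBlock0 z ++ [0] = [0] ++ substWord psiBlock0 z from ih]
    by_cases hc : c = 0
    · subst hc; rfl
    · simp only [substBlock0, psiBlock0, if_neg hc]
      rfl

/-- key word identity: `[1] ++ U1(z) = ψ1(z) ++ [1]` -/
lemma U1_id (z : List ℕ) : [1] ++ U1word z = psi1w z ++ [1] := by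
  induction z with
  | nil => rfl
  | cons c z ih =>
    show [1] ++ substWord substBlock1 (c :: z) = substWord psiBlock1 (c :: z) ++ [1]
    rw [substWord_cons, substWord_cons, List.append_assoc]
    by_cases hc : c = 0
    · subst hc
      show ([1,0] : List ℕ) ++ ([1] ++ U1word z) = [1,0] ++ (psi1w z ++ [1])
      rw [show [1] ++ U1word z = psi1w z ++ [1] from ih]
    · simp only [substBlock1, psiBlock1, if_neg hc]
      show [1] ++ ([1] ++ U1word z) = [1] ++ (psi1w z ++ [1])
      rw [show [1] ++ U1word z = psi1w z ++ [1] from ih]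

/-! wordThen and periodic machinery -/

lemma wordThen_nil (x : ℕ → ℕ) : wordThen [] x = x := by
  funext n; simp [wordThen]

lemma wordThen_cons (c : ℕ) (w : List ℕ) (x : ℕ → ℕ) :
    wordThen (c :: w) x = consSeq c (wordThen w x) := by
  funext n
  unfold wordThen consSeq
  rcases n with _ | m
  · simp
  · simp only [List.length_cons, Nat.add_lt_add_iff_right, List.getD_cons_succ,
      Nat.succ_ne_zero, if_false, Nat.succ_sub_one]
    have h2 : m + 1 - (w.length + 1) = m - w.length := by omega
    rw [h2]

lemma wordThen_append (u v : List ℕ) (x : ℕ → ℕ) :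
    wordThen (u ++ v) x = wordThen u (wordThen v x) := by
  induction u with
  | nil => rw [List.nil_append, wordThen_nil]
  | cons c u ih => rw [List.cons_append, wordThen_cons, wordThen_cons, ih]

lemma periodic_lt {w : List ℕ} {n : ℕ} (h : n < w.length) :
    periodic w n = w.getD n 0 := by
  unfold periodic
  rw [Nat.mod_eq_of_lt h]

lemma periodic_shift {w : List ℕ} (hw : w ≠ []) (n : ℕ) :
    periodic w (n + w.length) = periodic w n := by
  unfold periodic
  congr 1
  rw [Nat.add_mod_right]

lemma periodic_unfold {w : List ℕ} (hw : w ≠ []) :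
    periodic w = wordThen w (periodic w) := by
  have hl : 0 < w.length := List.length_pos_iff.mpr hw
  funext n
  unfold wordThen
  split
  · exact periodic_lt (by assumption)
  · rename_i h
    push_neg at h
    have h2 : n = (n - w.length) + w.length := by omega
    conv_lhs => rw [h2]
    rw [periodic_shift hw]

/-- uniqueness of fixed point of `z = wordThen w z` -/
lemma periodic_fixpt {w : List ℕ} (hw : w ≠ []) {z : ℕ → ℕ}
    (hz : z = wordThen w z) : z = periodic w := by
  have hl : 0 < w.length := List.length_pos_iff.mpr hw
  funext n
  induction n using Nat.strong_induction_on with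
  | _ n IH =>
    by_cases h : n < w.length
    · rw [hz]
      unfold wordThen
      rw [if_pos h, periodic_lt h]
    · push_neg at h
      have h1 : z n = z (n - w.length) := by
        conv_lhs => rw [hz]
        unfold wordThen
        rw [if_neg (by omega)]
      rw [h1, IH (n - w.length) (by omega)]
      unfold periodic
      congr 1
      rw [Nat.mod_eq_sub_mod h]

lemma wordThen_eq_self_append {A B : List ℕ} (hB : B ≠ []) :
    wordThen (A ++ B) (periodic B) = wordThen A (periodic B) := by
  rw [wordThen_append, ← periodic_unfold hB]

lemma wordPlus_append (A : List ℕ) {B : List ℕ} (hB : B ≠ []) :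
    wordPlus (A ++ B) = A ++ wordPlus B := by
  unfold wordPlus
  rw [List.dropLast_append, if_neg (by simpa using hB), List.append_assoc]

lemma getD_last_append (A : List ℕ) (C : List ℕ) (c : ℕ) :
    (A ++ C ++ [c]).getD (A.length + C.length) 0 = c := by
  have h : (A ++ C).length = A.length + C.length := by simp
  rw [List.getD_eq_getElem?_getD, ← h, List.getElem?_append_right (le_refl _), Nat.sub_self]
  simp

/-! ### Part E: List lex order mini-library and maxRot -/

abbrev LexLt (l₁ l₂ : List ℕ) : Prop := List.Lex (· < ·) l₁ l₂

lemma lex_irrefl (l : List ℕ) : ¬ LexLt l l := by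
  induction l with
  | nil => intro h; cases h
  | cons a t ih =>
    intro h
    cases h with
    | rel h => omega
    | cons h => exact ih h

lemma lex_trans {l₁ l₂ l₃ : List ℕ} (h1 : LexLt l₁ l₂) (h2 : LexLt l₂ l₃) :
    LexLt l₁ l₃ := by
  induction h1 generalizing l₃ with
  | nil =>
    cases h2 with
    | rel _ => exact List.Lex.nil
    | cons _ => exact List.Lex.nil
  | @rel t1 a t2 b hab =>
    cases h2 with
    | rel h => exact List.Lex.rel (hab.trans h)
    | cons h => exact List.Lex.rel hab
  | @cons t1 a t2 htail ih =>
    cases h2 with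
    | rel h => exact List.Lex.rel h
    | cons h => exact List.Lex.cons (ih h)

lemma lex_asymm {l₁ l₂ : List ℕ} (h1 : LexLt l₁ l₂) (h2 : LexLt l₂ l₁) : False :=
  lex_irrefl l₁ (lex_trans h1 h2)

lemma lex_trichotomy (l₁ l₂ : List ℕ) : LexLt l₁ l₂ ∨ l₁ = l₂ ∨ LexLt l₂ l₁ := by
  induction l₁ generalizing l₂ with
  | nil =>
    cases l₂ with
    | nil => exact Or.inr (Or.inl rfl)
    | cons b t => exact Or.inl List.Lex.nil
  | cons a t ih =>
    cases l₂ with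
    | nil => exact Or.inr (Or.inr List.Lex.nil)
    | cons b t2 =>
      rcases Nat.lt_trichotomy a b with h | h | h
      · exact Or.inl (List.Lex.rel h)
      · subst h
        rcases ih t2 with h | h | h
        · exact Or.inl (List.Lex.cons h)
        · exact Or.inr (Or.inl (by rw [h]))
        · exact Or.inr (Or.inr (List.Lex.cons h))
      · exact Or.inr (Or.inr (List.Lex.rel h))

lemma lex_append_left (B : List ℕ) {x y : List ℕ} (h : LexLt x y) :
    LexLt (B ++ x) (B ++ y) := by
  induction B with
  | nil => exact h
  | cons c B ih => exact List.Lex.cons ih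

/-! maxRot basic spec -/

private lemma foldl_max_mem (L : List (List ℕ)) (acc : List ℕ) :
    L.foldl (fun acc r => if LexLt acc r then r else acc) acc = acc ∨
      L.foldl (fun acc r => if LexLt acc r then r else acc) acc ∈ L := by
  induction L generalizing acc with
  | nil => exact Or.inl rfl
  | cons r L ih =>
    simp only [List.foldl_cons]
    rcases ih (if LexLt acc r then r else acc) with h | h
    · rw [h]
      split
      · exact Or.inr List.mem_cons_self
      · exact Or.inl rfl
    · exact Or.inr (List.mem_cons_of_mem _ h)

private lemma foldl_max_ge (L : List (List ℕ)) (acc : List ℕ) :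
    ¬ LexLt (L.foldl (fun acc r => if LexLt acc r then r else acc) acc) acc ∧
      ∀ r ∈ L, ¬ LexLt (L.foldl (fun acc r => if LexLt acc r then r else acc) acc) r := by
  induction L generalizing acc with
  | nil => exact ⟨lex_irrefl _, by simp⟩
  | cons r L ih =>
    simp only [List.foldl_cons]
    by_cases hle : LexLt acc r
    · rw [if_pos hle]
      obtain ⟨h1, h2⟩ := ih r
      refine ⟨fun hc => h1 (lex_trans hc hle), ?_⟩
      intro r' hr'
      rcases List.mem_cons.mp hr' with rfl | hr'
      · exact h1
      · exact h2 r' hr'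
    · rw [if_neg hle]
      obtain ⟨h1, h2⟩ := ih acc
      refine ⟨h1, ?_⟩
      intro r' hr'
      rcases List.mem_cons.mp hr' with rfl | hr'
      · intro hc
        rcases lex_trichotomy acc r' with h | h | h
        · exact hle h
        · exact h1 (h ▸ hc)
        · exact h1 (lex_trans hc h)
      · exact h2 r' hr'

lemma maxRot_is_rotate {w : List ℕ} (hw : w ≠ []) : ∃ k, maxRot w = w.rotate k := by
  unfold maxRot
  rcases foldl_max_mem ((List.range w.length).map (w.rotate ·)) w with h | h
  · exact ⟨0, by rw [h, List.rotate_zero]⟩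
  · obtain ⟨k, _, hk⟩ := List.mem_map.mp h
    exact ⟨k, hk.symm⟩

lemma maxRot_ge {w : List ℕ} (hw : w ≠ []) (k : ℕ) :
    ¬ LexLt (maxRot w) (w.rotate k) := by
  have hlen : 0 < w.length := List.length_pos_iff.mpr hw
  have hmem : w.rotate (k % w.length) ∈ (List.range w.length).map (w.rotate ·) :=
    List.mem_map.mpr ⟨k % w.length, List.mem_range.mpr (Nat.mod_lt _ hlen), rfl⟩
  have := (foldl_max_ge ((List.range w.length).map (w.rotate ·)) w).2 _ hmem
  rw [List.rotate_mod] at this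
  exact this

lemma maxRot_unique {w r : List ℕ} (hw : w ≠ []) (hr : ∃ j, r = w.rotate j)
    (hge : ∀ j, ¬ LexLt r (w.rotate j)) : maxRot w = r := by
  obtain ⟨k0, hk0⟩ := maxRot_is_rotate hw
  obtain ⟨j0, hj0⟩ := hr
  have h1 : ¬ LexLt r (maxRot w) := by rw [hk0]; exact hge k0
  have h2 : ¬ LexLt (maxRot w) r := by rw [hj0]; exact maxRot_ge hw j0
  rcases lex_trichotomy (maxRot w) r with h | h | h
  · exact absurd h h2
  · exact h
  · exact absurd h h1

lemma length_maxRot {w : List ℕ} (hw : w ≠ []) : (maxRot w).length = w.length := by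
  obtain ⟨k, hk⟩ := maxRot_is_rotate hw
  rw [hk, List.length_rotate]

lemma maxRot_perm {w : List ℕ} (hw : w ≠ []) : (maxRot w).Perm w := by
  obtain ⟨k, hk⟩ := maxRot_is_rotate hw
  rw [hk]; exact List.rotate_perm w k

/-! rotations and substitutions -/

lemma rotate_append_left (A B : List ℕ) : (A ++ B).rotate A.length = B ++ A := by
  rw [List.rotate_eq_drop_append_take (by simp), List.drop_left, List.take_left]

lemma substWord_rotate (f : ℕ → List ℕ) (w : List ℕ) {k : ℕ} (hk : k ≤ w.length) :
    substWord f (w.rotate k) = (substWord f w).rotate (substWord f (w.take k)).length := by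
  calc substWord f (w.rotate k)
      = substWord f (w.drop k ++ w.take k) := by rw [List.rotate_eq_drop_append_take hk]
    _ = substWord f (w.drop k) ++ substWord f (w.take k) := substWord_append _ _ _
    _ = (substWord f (w.take k) ++ substWord f (w.drop k)).rotate
          (substWord f (w.take k)).length := (rotate_append_left _ _).symm
    _ = (substWord f w).rotate (substWord f (w.take k)).length := by
          rw [← substWord_append, List.take_append_drop]

lemma substWord_posDecomp (f : ℕ → List ℕ) (w : List ℕ) :
    ∀ j, j < (substWord f w).length →
      ∃ w₁ c w₂ o, w = w₁ ++ c :: w₂ ∧ o < (f c).length ∧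
        j = (substWord f w₁).length + o := by
  induction w with
  | nil => intro j hj; simp [substWord] at hj
  | cons c w ih =>
    intro j hj
    rw [substWord_cons, List.length_append] at hj
    by_cases h : j < (f c).length
    · exact ⟨[], c, w, j, rfl, h, by simp [substWord]⟩
    · push_neg at h
      obtain ⟨w₁, c', w₂, o, hw, ho, hj'⟩ := ih (j - (f c).length) (by omega)
      exact ⟨c :: w₁, c', w₂, o, by rw [hw]; rfl, ho,
        by rw [substWord_cons, List.length_append]; omega⟩

/-! ### Part F: monotonicity and maxRot under substitution -/

lemma psi1w_head {z : List ℕ} (hz : z ≠ []) : ∃ t, psi1w z = 1 :: t := by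
  cases z with
  | nil => exact absurd rfl hz
  | cons c z =>
    show ∃ t, substWord psiBlock1 (c :: z) = 1 :: t
    rw [substWord_cons]
    unfold psiBlock1
    split
    · exact ⟨0 :: psi1w z, rfl⟩
    · exact ⟨psi1w z, rfl⟩

lemma psi0w_head {z : List ℕ} (t : List ℕ) (hz : z = 1 :: t) :
    psi0w z = 1 :: 0 :: psi0w t := by
  subst hz
  show substWord psiBlock0 (1 :: t) = _
  rw [substWord_cons]
  rfl


lemma lex_psi0 : ∀ (x y : List ℕ), (∀ c ∈ x, c ≤ 1) → (∀ c ∈ y, c ≤ 1) →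
    x.length = y.length → LexLt x y → LexLt (psi0w x) (psi0w y) := by
  intro x
  induction x with
  | nil =>
    intro y _ _ hlen h
    cases h
    simp at hlen
  | cons a t1 ih =>
    intro y hx hy hlen h
    cases y with
    | nil => cases h
    | cons b t2 =>
      cases h with
      | rel hab =>
        have ha : a = 0 := by
          have h1 := hx a (by simp)
          have h2 := hy b (by simp)
          omega
        have hb : b = 1 := by
          have h1 := hy b (by simp)
          have h2 := hx a (by simp)
          omega
        subst ha; subst hb
        show LexLt (substWord psiBlock0 (0 :: t1)) (substWord psiBlock0 (1 :: t2))
        rw [substWord_cons, substWord_cons]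
        exact List.Lex.rel (by norm_num)
      | cons htail =>
        show LexLt (substWord psiBlock0 (a :: t1)) (substWord psiBlock0 (a :: t2))
        rw [substWord_cons, substWord_cons]
        exact lex_append_left _ (ih t2 (fun c hc => hx c (by simp [hc]))
          (fun c hc => hy c (by simp [hc])) (by simpa using hlen) htail)

lemma lex_psi1 : ∀ (x y : List ℕ), (∀ c ∈ x, c ≤ 1) → (∀ c ∈ y, c ≤ 1) →
    x.length = y.length → x.count 1 = y.count 1 → LexLt x y →
    LexLt (psi1w x) (psi1w y) := by
  intro x
  induction x with
  | nil =>
    intro y _ _ hlen _ h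
    cases h
    simp at hlen
  | cons a t1 ih =>
    intro y hx hy hlen hcnt h
    cases y with
    | nil => cases h
    | cons b t2 =>
      cases h with
      | rel hab =>
        have ha : a = 0 := by
          have h1 := hx a (by simp)
          have h2 := hy b (by simp)
          omega
        have hb : b = 1 := by
          have h1 := hy b (by simp)
          have h2 := hx a (by simp)
          omega
        subst ha; subst hb
        -- t2 is nonempty since it contains a 0
        have hlen2 : t1.length = t2.length := by simpa using hlen
        have hcnt2 : t1.count 1 = t2.count 1 + 1 := by
          simp [List.count_cons] at hcnt
          omega
        have ht2 : t2 ≠ [] := by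
          intro hc
          subst hc
          have h1 : t1.count 1 ≤ t1.length := List.count_le_length
          have h2 : t1.length = 0 := by simpa using hlen2
          simp at hcnt2
          omega
        obtain ⟨tt, htt⟩ := psi1w_head ht2
        show LexLt (substWord psiBlock1 (0 :: t1)) (substWord psiBlock1 (1 :: t2))
        rw [substWord_cons, substWord_cons]
        show LexLt (1 :: 0 :: psi1w t1) (1 :: ([] ++ psi1w t2))
        rw [List.nil_append, htt]
        exact List.Lex.cons (List.Lex.rel (by norm_num))
      | cons htail =>
        show LexLt (substWord psiBlock1 (a :: t1)) (substWord psiBlock1 (a :: t2))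
        rw [substWord_cons, substWord_cons]
        refine lex_append_left _ (ih t2 (fun c hc => hx c (by simp [hc]))
          (fun c hc => hy c (by simp [hc])) (by simpa using hlen) ?_ htail)
        by_cases ha : a = 1 <;> simp [List.count_cons, ha] at hcnt ⊢ <;> omega

/-! rotation classification -/

lemma rot_classify0 {w : List ℕ} (hw : ∀ c ∈ w, c ≤ 1) :
    ∀ j, j < (U0word w).length →
    (∃ t, (U0word w).rotate j = 0 :: t) ∨
      (∃ k, k ≤ w.length ∧ (U0word w).rotate j = psi0w (w.rotate k)) := by
  intro j hj
  obtain ⟨w₁, c, w₂, o, hw', ho, hj'⟩ := substWord_posDecomp substBlock0 w j hj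
  have hc : c ≤ 1 := hw c (by rw [hw']; simp)
  have hrot : (U0word w).rotate j =
      (substBlock0 c ++ U0word (w₂ ++ w₁)).rotate o := by
    subst hj'
    rw [hw']
    show (substWord substBlock0 (w₁ ++ c :: w₂)).rotate _ = _
    rw [substWord_append, substWord_cons, ← List.rotate_rotate,
      rotate_append_left, List.append_assoc, ← substWord_append]
    rfl
  have hrotk : w.rotate w₁.length = c :: (w₂ ++ w₁) := by
    rw [hw', rotate_append_left]; rfl
  interval_cases c
  · -- c = 0, block [0], o = 0
    have ho0 : o = 0 := by simpa [substBlock0] using ho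
    subst ho0
    rw [List.rotate_zero] at hrot
    exact Or.inl ⟨U0word (w₂ ++ w₁), hrot⟩
  · -- c = 1, block [0,1]
    have ho1 : o = 0 ∨ o = 1 := by
      have : (substBlock0 1).length = 2 := rfl
      omega
    rcases ho1 with rfl | rfl
    · rw [List.rotate_zero] at hrot
      exact Or.inl ⟨1 :: U0word (w₂ ++ w₁), hrot⟩
    · right
      refine ⟨w₁.length, by rw [hw']; simp, ?_⟩
      rw [hrotk]
      rw [show psi0w (1 :: (w₂ ++ w₁)) = 1 :: 0 :: psi0w (w₂ ++ w₁) from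
        psi0w_head _ rfl]
      rw [hrot]
      show (0 :: 1 :: U0word (w₂ ++ w₁)).rotate 1 = _
      rw [List.rotate_cons_succ, List.rotate_zero]
      show (1 :: U0word (w₂ ++ w₁)) ++ [0] = _
      rw [List.cons_append]
      rw [show U0word (w₂ ++ w₁) ++ [0] = [0] ++ psi0w (w₂ ++ w₁) from U0_id _]
      rfl

lemma rot_classify1 {w : List ℕ} (hw : ∀ c ∈ w, c ≤ 1) :
    ∀ j, j < (U1word w).length →
    (∃ t, (U1word w).rotate j = 0 :: t) ∨
      (∃ k, k ≤ w.length ∧ (U1word w).rotate j = psi1w (w.rotate k)) := by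
  intro j hj
  obtain ⟨w₁, c, w₂, o, hw', ho, hj'⟩ := substWord_posDecomp substBlock1 w j hj
  have hc : c ≤ 1 := hw c (by rw [hw']; simp)
  have hrot : (U1word w).rotate j =
      (substBlock1 c ++ U1word (w₂ ++ w₁)).rotate o := by
    subst hj'
    rw [hw']
    show (substWord substBlock1 (w₁ ++ c :: w₂)).rotate _ = _
    rw [substWord_append, substWord_cons, ← List.rotate_rotate,
      rotate_append_left, List.append_assoc, ← substWord_append]
    rfl
  have hrotk : w.rotate (w₁.length + 1) = (w₂ ++ w₁) ++ [c] := by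
    rw [hw', ← List.rotate_rotate, rotate_append_left]
    show (c :: (w₂ ++ w₁)).rotate 1 = _
    rw [List.rotate_cons_succ, List.rotate_zero]
  have hkle : w₁.length + 1 ≤ w.length := by rw [hw']; simp
  interval_cases c
  · -- c = 0, block [0,1]
    have ho1 : o = 0 ∨ o = 1 := by
      have : (substBlock1 0).length = 2 := rfl
      omega
    rcases ho1 with rfl | rfl
    · rw [List.rotate_zero] at hrot
      exact Or.inl ⟨1 :: U1word (w₂ ++ w₁), hrot⟩
    · right
      refine ⟨w₁.length + 1, hkle, ?_⟩
      have hps : psi1w ((w₂ ++ w₁) ++ [0]) = psi1w (w₂ ++ w₁) ++ [1, 0] := by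
        show substWord psiBlock1 _ = _
        rw [substWord_append]
        rfl
      rw [hrotk, hrot]
      show (0 :: 1 :: U1word (w₂ ++ w₁)).rotate 1 = _
      rw [List.rotate_cons_succ, List.rotate_zero, hps]
      show (([1] : List ℕ) ++ U1word (w₂ ++ w₁)) ++ [0] = _
      rw [U1_id, List.append_assoc]
      rfl
  · -- c = 1, block [1], o = 0
    have ho0 : o = 0 := by simpa [substBlock1] using ho
    subst ho0
    rw [List.rotate_zero] at hrot
    right
    refine ⟨w₁.length + 1, hkle, ?_⟩
    rw [hrotk, hrot]
    have : psi1w ((w₂ ++ w₁) ++ [1]) = psi1w (w₂ ++ w₁) ++ [1] := by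
      show substWord psiBlock1 _ = _
      rw [substWord_append]
      rfl
    rw [this]
    show ([1] : List ℕ) ++ U1word (w₂ ++ w₁) = _
    exact U1_id _

/-! ### Part G: maxRot under substitutions -/

lemma binary_of_perm {l w : List ℕ} (h : l.Perm w) (hw : ∀ c ∈ w, c ≤ 1) :
    ∀ c ∈ l, c ≤ 1 := fun c hc => hw c (h.subset hc)

lemma maxRot_head_one {w : List ℕ} (hw : ∀ c ∈ w, c ≤ 1) (h1 : 1 ∈ w) :
    ∃ t, maxRot w = 1 :: t := by
  have hne : w ≠ [] := by rintro rfl; simp at h1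
  obtain ⟨n, hn, hval⟩ := List.getElem_of_mem h1
  have hrot : ∃ t', w.rotate n = 1 :: t' := by
    rw [List.rotate_eq_drop_append_take hn.le]
    rw [List.drop_eq_getElem_cons hn, hval]
    exact ⟨_, rfl⟩
  obtain ⟨t', ht'⟩ := hrot
  have hMne : maxRot w ≠ [] := by
    intro hcon
    have := length_maxRot hne
    rw [hcon] at this
    simp at this
    exact hne (List.length_eq_zero_iff.mp this.symm)
  obtain ⟨c, t, hct⟩ := List.exists_cons_of_ne_nil hMne
  have hc : c ≤ 1 := binary_of_perm (maxRot_perm hne) hw c (by rw [hct]; simp)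
  have : c = 1 := by
    by_contra hcon
    have hc0 : c = 0 := by omega
    have := maxRot_ge hne n
    rw [hct, ht', hc0] at this
    exact this (List.Lex.rel (by norm_num))
  rw [hct, this]
  exact ⟨t, rfl⟩

lemma maxRot_U0 {w : List ℕ} (hw : ∀ c ∈ w, c ≤ 1) (h1 : 1 ∈ w) :
    maxRot (U0word w) = psi0w (maxRot w) := by
  have hne : w ≠ [] := by rintro rfl; simp at h1
  have hU0ne : U0word w ≠ [] := substWord_ne_nil substBlock0_ne_nil hne
  obtain ⟨k0, hk0⟩ := maxRot_is_rotate hne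
  have hk0' : maxRot w = w.rotate (k0 % w.length) := by rw [List.rotate_mod]; exact hk0
  set k := k0 % w.length with hkdef
  have hk : k ≤ w.length := (Nat.mod_lt _ (List.length_pos_iff.mpr hne)).le
  obtain ⟨z, hz⟩ := maxRot_head_one hw h1
  -- psi0w (maxRot w) is a rotation of U0word w
  have hrep : psi0w (maxRot w) =
      (U0word w).rotate ((substWord substBlock0 (w.take k)).length + 1) := by
    have e1 : U0word (w.rotate k) =
        (U0word w).rotate (substWord substBlock0 (w.take k)).length :=
      substWord_rotate substBlock0 w hk
    rw [← List.rotate_rotate, ← e1, ← hk0', hz]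
    rw [psi0w_head _ rfl]
    show _ = (substWord substBlock0 (1 :: z)).rotate 1
    rw [substWord_cons]
    show 1 :: 0 :: psi0w z = (0 :: 1 :: U0word z).rotate 1
    rw [List.rotate_cons_succ, List.rotate_zero]
    show _ = (1 :: U0word z) ++ [0]
    rw [List.cons_append, U0_id]
    rfl
  have hge : ∀ j, ¬ LexLt (psi0w (maxRot w)) ((U0word w).rotate j) := by
    intro j
    have hlen : 0 < (U0word w).length := List.length_pos_iff.mpr hU0ne
    rw [← List.rotate_mod]
    rcases rot_classify0 hw (j % (U0word w).length) (Nat.mod_lt _ hlen) with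
      ⟨t, ht⟩ | ⟨k', hk', hpsi⟩
    · rw [ht, hz, psi0w_head _ rfl]
      intro hc
      cases hc with
      | rel h => exact absurd h (by norm_num)
    · rw [hpsi]
      rcases lex_trichotomy (maxRot w) (w.rotate k') with h | h | h
      · exact absurd h (maxRot_ge hne k')
      · rw [h]; exact lex_irrefl _
      · intro hc
        refine lex_asymm hc (lex_psi0 _ _ ?_ ?_ ?_ h)
        · exact binary_of_perm (List.rotate_perm _ _) hw
        · exact binary_of_perm (maxRot_perm hne) hw
        · rw [List.length_rotate, length_maxRot hne]
  exact maxRot_unique hU0ne ⟨_, hrep⟩ hge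

lemma maxRot_U1 {w : List ℕ} (hw : ∀ c ∈ w, c ≤ 1) (h1 : 1 ∈ w) :
    maxRot (U1word w) = psi1w (maxRot w) := by
  have hne : w ≠ [] := by rintro rfl; simp at h1
  have hU1ne : U1word w ≠ [] := substWord_ne_nil substBlock1_ne_nil hne
  obtain ⟨k0, hk0⟩ := maxRot_is_rotate hne
  have hk0' : maxRot w = w.rotate (k0 % w.length) := by rw [List.rotate_mod]; exact hk0
  set k := k0 % w.length with hkdef
  have hk : k ≤ w.length := (Nat.mod_lt _ (List.length_pos_iff.mpr hne)).le
  obtain ⟨z, hz⟩ := maxRot_head_one hw h1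
  have hrep : psi1w (maxRot w) =
      (U1word w).rotate ((substWord substBlock1 (w.take k)).length +
        (psi1w z).length) := by
    have e1 : U1word (w.rotate k) =
        (U1word w).rotate (substWord substBlock1 (w.take k)).length :=
      substWord_rotate substBlock1 w hk
    rw [← List.rotate_rotate, ← e1, ← hk0', hz]
    show psi1w (1 :: z) = (substWord substBlock1 (1 :: z)).rotate (psi1w z).length
    rw [substWord_cons]
    show psi1w (1 :: z) = (([1] : List ℕ) ++ U1word z).rotate (psi1w z).length
    rw [U1_id, rotate_append_left]
    show substWord psiBlock1 (1 :: z) = _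
    rw [substWord_cons]
    rfl
  have hge : ∀ j, ¬ LexLt (psi1w (maxRot w)) ((U1word w).rotate j) := by
    intro j
    have hlen : 0 < (U1word w).length := List.length_pos_iff.mpr hU1ne
    rw [← List.rotate_mod]
    rcases rot_classify1 hw (j % (U1word w).length) (Nat.mod_lt _ hlen) with
      ⟨t, ht⟩ | ⟨k', hk', hpsi⟩
    · rw [ht, hz]
      rw [show psi1w (1 :: z) = 1 :: psi1w z from by
        show substWord psiBlock1 (1 :: z) = _; rw [substWord_cons]; rfl]
      intro hc
      cases hc with
      | rel h => exact absurd h (by norm_num)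
    · rw [hpsi]
      rcases lex_trichotomy (maxRot w) (w.rotate k') with h | h | h
      · exact absurd h (maxRot_ge hne k')
      · rw [h]; exact lex_irrefl _
      · intro hc
        refine lex_asymm hc (lex_psi1 _ _ ?_ ?_ ?_ ?_ h)
        · exact binary_of_perm (List.rotate_perm _ _) hw
        · exact binary_of_perm (maxRot_perm hne) hw
        · rw [List.length_rotate, length_maxRot hne]
        · rw [(List.rotate_perm _ _).count_eq, (maxRot_perm hne).count_eq]
  exact maxRot_unique hU1ne ⟨_, hrep⟩ hge

/-! ### Part H: sequence-level substitutions -/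

def Sof (x : ℕ → ℕ) (i : ℕ) : ℕ := ∑ t ∈ Finset.range i, x t
def Zof (x : ℕ → ℕ) (i : ℕ) : ℕ := ∑ t ∈ Finset.range i, (1 - x t)
def F0 (x : ℕ → ℕ) (i : ℕ) : ℕ := i + Sof x i
def G1 (x : ℕ → ℕ) (i : ℕ) : ℕ := i + Zof x i

noncomputable def psi0seq (x : ℕ → ℕ) (n : ℕ) : ℕ :=
  if ∃ i, F0 x i = n ∧ x i = 1 then 1 else 0

noncomputable def psi1seq (x : ℕ → ℕ) (n : ℕ) : ℕ :=
  if ∃ i, G1 x i = n then 1 else 0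

lemma Sof_succ (x : ℕ → ℕ) (i : ℕ) : Sof x (i + 1) = Sof x i + x i :=
  Finset.sum_range_succ x i

lemma Zof_succ (x : ℕ → ℕ) (i : ℕ) : Zof x (i + 1) = Zof x i + (1 - x i) :=
  Finset.sum_range_succ _ i

lemma F0_zero (x : ℕ → ℕ) : F0 x 0 = 0 := by simp [F0, Sof]

lemma G1_zero (x : ℕ → ℕ) : G1 x 0 = 0 := by simp [G1, Zof]

lemma F0_succ (x : ℕ → ℕ) (i : ℕ) : F0 x (i + 1) = F0 x i + 1 + x i := by
  unfold F0; rw [Sof_succ]; ring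

lemma G1_succ (x : ℕ → ℕ) (i : ℕ) : G1 x (i + 1) = G1 x i + 1 + (1 - x i) := by
  unfold G1; rw [Zof_succ]; ring

lemma F0_strictMono (x : ℕ → ℕ) : StrictMono (F0 x) :=
  strictMono_nat_of_lt_succ (fun i => by rw [F0_succ]; omega)

lemma G1_strictMono (x : ℕ → ℕ) : StrictMono (G1 x) :=
  strictMono_nat_of_lt_succ (fun i => by rw [G1_succ]; omega)

lemma F0_ge (x : ℕ → ℕ) (i : ℕ) : i ≤ F0 x i := Nat.le_add_right _ _

lemma G1_ge (x : ℕ → ℕ) (i : ℕ) : i ≤ G1 x i := Nat.le_add_right _ _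

lemma Sof_cons (c : ℕ) (x : ℕ → ℕ) (i : ℕ) :
    Sof (consSeq c x) (i + 1) = c + Sof x i := by
  unfold Sof
  rw [Finset.sum_range_succ']
  simp [consSeq]
  omega

lemma Zof_cons (c : ℕ) (x : ℕ → ℕ) (i : ℕ) :
    Zof (consSeq c x) (i + 1) = (1 - c) + Zof x i := by
  unfold Zof
  rw [Finset.sum_range_succ']
  simp [consSeq]
  omega

lemma F0_cons (c : ℕ) (x : ℕ → ℕ) (i : ℕ) :
    F0 (consSeq c x) (i + 1) = (1 + c) + F0 x i := by
  unfold F0; rw [Sof_cons]; ring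

lemma G1_cons (c : ℕ) (x : ℕ → ℕ) (i : ℕ) :
    G1 (consSeq c x) (i + 1) = (1 + (1 - c)) + G1 x i := by
  unfold G1; rw [Zof_cons]; ring

lemma psi0seq_le_one (x : ℕ → ℕ) (n : ℕ) : psi0seq x n ≤ 1 := by
  unfold psi0seq; split <;> omega

lemma psi1seq_le_one (x : ℕ → ℕ) (n : ℕ) : psi1seq x n ≤ 1 := by
  unfold psi1seq; split <;> omega

/-- C0 for ψ0 -/
lemma psi0seq_cons {c : ℕ} (hc : c ≤ 1) (x : ℕ → ℕ) :
    psi0seq (consSeq c x) = wordThen (psiBlock0 c) (psi0seq x) := by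
  funext n
  interval_cases c
  · -- block [0]
    show psi0seq (consSeq 0 x) n = wordThen [0] (psi0seq x) n
    rcases n with _ | m
    · have : ¬ ∃ i, F0 (consSeq 0 x) i = 0 ∧ consSeq 0 x i = 1 := by
        rintro ⟨i, hFi, hvi⟩
        rcases i with _ | i'
        · simp [consSeq] at hvi
        · rw [F0_cons] at hFi; omega
      rw [psi0seq, if_neg this]
      rfl
    · have hiff : (∃ i, F0 (consSeq 0 x) i = m + 1 ∧ consSeq 0 x i = 1) ↔
          (∃ i, F0 x i = m ∧ x i = 1) := by
        constructor
        · rintro ⟨i, hFi, hvi⟩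
          rcases i with _ | i'
          · simp [consSeq] at hvi
          · rw [F0_cons] at hFi
            refine ⟨i', by omega, ?_⟩
            simpa [consSeq] using hvi
        · rintro ⟨i, hFi, hvi⟩
          exact ⟨i + 1, by rw [F0_cons]; omega, by simpa [consSeq] using hvi⟩
      show psi0seq (consSeq 0 x) (m+1) = wordThen [0] (psi0seq x) (m+1)
      unfold psi0seq wordThen
      rw [if_congr hiff rfl rfl]
      simp
  · -- block [1,0]
    show psi0seq (consSeq 1 x) n = wordThen [1,0] (psi0seq x) n
    rcases n with _ | _ | m
    · have : ∃ i, F0 (consSeq 1 x) i = 0 ∧ consSeq 1 x i = 1 :=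
        ⟨0, F0_zero _, rfl⟩
      rw [psi0seq, if_pos this]; rfl
    · have : ¬ ∃ i, F0 (consSeq 1 x) i = 1 ∧ consSeq 1 x i = 1 := by
        rintro ⟨i, hFi, hvi⟩
        rcases i with _ | i'
        · rw [F0_zero] at hFi; omega
        · rw [F0_cons] at hFi; omega
      rw [psi0seq, if_neg this]; rfl
    · have hiff : (∃ i, F0 (consSeq 1 x) i = m + 2 ∧ consSeq 1 x i = 1) ↔
          (∃ i, F0 x i = m ∧ x i = 1) := by
        constructor
        · rintro ⟨i, hFi, hvi⟩
          rcases i with _ | i'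
          · rw [F0_zero] at hFi; omega
          · rw [F0_cons] at hFi
            refine ⟨i', by omega, ?_⟩
            simpa [consSeq] using hvi
        · rintro ⟨i, hFi, hvi⟩
          exact ⟨i + 1, by rw [F0_cons]; omega, by simpa [consSeq] using hvi⟩
      show psi0seq (consSeq 1 x) (m+2) = wordThen [1,0] (psi0seq x) (m+2)
      unfold psi0seq wordThen
      rw [if_congr hiff rfl rfl]
      simp

/-- C0 for ψ1 -/
lemma psi1seq_cons {c : ℕ} (hc : c ≤ 1) (x : ℕ → ℕ) :
    psi1seq (consSeq c x) = wordThen (psiBlock1 c) (psi1seq x) := by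
  funext n
  interval_cases c
  · -- block [1,0]
    show psi1seq (consSeq 0 x) n = wordThen [1,0] (psi1seq x) n
    rcases n with _ | _ | m
    · rw [psi1seq, if_pos ⟨0, G1_zero _⟩]; rfl
    · have : ¬ ∃ i, G1 (consSeq 0 x) i = 1 := by
        rintro ⟨i, hFi⟩
        rcases i with _ | i'
        · rw [G1_zero] at hFi; omega
        · rw [G1_cons] at hFi; omega
      rw [psi1seq, if_neg this]; rfl
    · have hiff : (∃ i, G1 (consSeq 0 x) i = m + 2) ↔ (∃ i, G1 x i = m) := by
        constructor
        · rintro ⟨i, hFi⟩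
          rcases i with _ | i'
          · rw [G1_zero] at hFi; omega
          · rw [G1_cons] at hFi
            exact ⟨i', by omega⟩
        · rintro ⟨i, hFi⟩
          exact ⟨i + 1, by rw [G1_cons]; omega⟩
      show psi1seq (consSeq 0 x) (m+2) = wordThen [1,0] (psi1seq x) (m+2)
      unfold psi1seq wordThen
      rw [if_congr hiff rfl rfl]
      simp
  · -- block [1]
    show psi1seq (consSeq 1 x) n = wordThen [1] (psi1seq x) n
    rcases n with _ | m
    · rw [psi1seq, if_pos ⟨0, G1_zero _⟩]; rfl
    · have hiff : (∃ i, G1 (consSeq 1 x) i = m + 1) ↔ (∃ i, G1 x i = m) := by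
        constructor
        · rintro ⟨i, hFi⟩
          rcases i with _ | i'
          · rw [G1_zero] at hFi; omega
          · rw [G1_cons] at hFi
            exact ⟨i', by omega⟩
        · rintro ⟨i, hFi⟩
          exact ⟨i + 1, by rw [G1_cons]; omega⟩
      show psi1seq (consSeq 1 x) (m+1) = wordThen [1] (psi1seq x) (m+1)
      unfold psi1seq wordThen
      rw [if_congr hiff rfl rfl]
      simp

/-- C1 -/
lemma psi0seq_wordThen {A : List ℕ} (hA : ∀ c ∈ A, c ≤ 1) (x : ℕ → ℕ) :
    psi0seq (wordThen A x) = wordThen (psi0w A) (psi0seq x) := by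
  induction A with
  | nil => rw [wordThen_nil]; show _ = wordThen [] _; rw [wordThen_nil]
  | cons c A ih =>
    rw [wordThen_cons, psi0seq_cons (hA c (by simp)),
      ih (fun d hd => hA d (by simp [hd]))]
    rw [← wordThen_append]
    rfl

lemma psi1seq_wordThen {A : List ℕ} (hA : ∀ c ∈ A, c ≤ 1) (x : ℕ → ℕ) :
    psi1seq (wordThen A x) = wordThen (psi1w A) (psi1seq x) := by
  induction A with
  | nil => rw [wordThen_nil]; show _ = wordThen [] _; rw [wordThen_nil]
  | cons c A ih =>
    rw [wordThen_cons, psi1seq_cons (hA c (by simp)),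
      ih (fun d hd => hA d (by simp [hd]))]
    rw [← wordThen_append]
    rfl

/-- C2 -/
lemma psi0seq_periodic {B : List ℕ} (hB : B ≠ []) (hbin : ∀ c ∈ B, c ≤ 1) :
    psi0seq (periodic B) = periodic (psi0w B) := by
  apply periodic_fixpt (substWord_ne_nil psiBlock0_ne_nil hB)
  conv_lhs => rw [periodic_unfold hB]
  rw [psi0seq_wordThen hbin]
  rfl

lemma psi1seq_periodic {B : List ℕ} (hB : B ≠ []) (hbin : ∀ c ∈ B, c ≤ 1) :
    psi1seq (periodic B) = periodic (psi1w B) := by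
  apply periodic_fixpt (substWord_ne_nil psiBlock1_ne_nil hB)
  conv_lhs => rw [periodic_unfold hB]
  rw [psi1seq_wordThen hbin]
  rfl

/-! agreement lemmas -/

lemma agree_psi0 {x y : ℕ → ℕ} {m : ℕ} (hag : ∀ i < m, x i = y i)
    (hxm : x m = 0) (hym : y m = 1) :
    (∀ n < F0 x m, psi0seq x n = psi0seq y n) ∧
      psi0seq x (F0 x m) = 0 ∧ psi0seq y (F0 x m) = 1 := by
  have hSF : ∀ i ≤ m, F0 x i = F0 y i := by
    intro i hi
    unfold F0 Sof
    congr 1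
    exact Finset.sum_congr rfl (fun t ht => hag t (lt_of_lt_of_le (Finset.mem_range.mp ht) hi))
  refine ⟨?_, ?_, ?_⟩
  · intro n hn
    have hiff : (∃ i, F0 x i = n ∧ x i = 1) ↔ (∃ i, F0 y i = n ∧ y i = 1) := by
      constructor
      · rintro ⟨i, hFi, hvi⟩
        have him : i < m := by
          by_contra hc
          push_neg at hc
          have := (F0_strictMono x).monotone hc
          omega
        exact ⟨i, by rw [← hSF i him.le]; exact hFi, by rw [← hag i him]; exact hvi⟩
      · rintro ⟨i, hFi, hvi⟩
        have him : i < m := by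
          by_contra hc
          push_neg at hc
          have h1 := (F0_strictMono y).monotone hc
          have h2 := hSF m le_rfl
          omega
        exact ⟨i, by rw [hSF i him.le]; exact hFi, by rw [hag i him]; exact hvi⟩
    unfold psi0seq
    rw [if_congr hiff rfl rfl]
  · unfold psi0seq
    rw [if_neg]
    rintro ⟨i, hFi, hvi⟩
    have := (F0_strictMono x).injective hFi
    subst this
    omega
  · unfold psi0seq
    rw [if_pos ⟨m, (hSF m le_rfl).symm, hym⟩]

lemma agree_psi1 {x y : ℕ → ℕ} {m : ℕ} (hag : ∀ i < m, x i = y i)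
    (hxm : x m = 0) (hym : y m = 1) :
    (∀ n < G1 x m + 1, psi1seq x n = psi1seq y n) ∧
      psi1seq x (G1 x m + 1) = 0 ∧ psi1seq y (G1 x m + 1) = 1 := by
  have hSF : ∀ i ≤ m, G1 x i = G1 y i := by
    intro i hi
    unfold G1 Zof
    congr 1
    exact Finset.sum_congr rfl (fun t ht => by
      rw [hag t (lt_of_lt_of_le (Finset.mem_range.mp ht) hi)])
  refine ⟨?_, ?_, ?_⟩
  · intro n hn
    rcases Nat.lt_or_ge n (G1 x m) with hn' | hn'
    · have hiff : (∃ i, G1 x i = n) ↔ (∃ i, G1 y i = n) := by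
        constructor
        · rintro ⟨i, hFi⟩
          have him : i < m := by
            by_contra hc
            push_neg at hc
            have := (G1_strictMono x).monotone hc
            omega
          exact ⟨i, by rw [← hSF i him.le]; exact hFi⟩
        · rintro ⟨i, hFi⟩
          have him : i < m := by
            by_contra hc
            push_neg at hc
            have h1 := (G1_strictMono y).monotone hc
            have h2 := hSF m le_rfl
            omega
          exact ⟨i, by rw [hSF i him.le]; exact hFi⟩
      unfold psi1seq
      rw [if_congr hiff rfl rfl]
    · have hn2 : n = G1 x m := by omega
      subst hn2
      unfold psi1seq
      rw [if_pos ⟨m, rfl⟩, if_pos ⟨m, (hSF m le_rfl).symm⟩]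
  · unfold psi1seq
    rw [if_neg]
    rintro ⟨i, hFi⟩
    rcases Nat.lt_or_ge i (m + 1) with hi | hi
    · have := (G1_strictMono x).monotone (Nat.lt_succ_iff.mp hi)
      omega
    · have h1 := (G1_strictMono x).monotone hi
      rw [G1_succ] at h1
      omega
  · have hw : G1 y (m + 1) = G1 x m + 1 := by
      rw [G1_succ, hym, ← hSF m le_rfl]
    unfold psi1seq
    rw [if_pos ⟨m + 1, hw⟩]

/-! ### Part H2: counting and balance transfer -/

noncomputable def idxGe (f : ℕ → ℕ) (p : ℕ) : ℕ := sInf {i | p ≤ f i}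

section idxGe

variable {f : ℕ → ℕ}

lemma idxGe_spec (hf : ∀ i, i ≤ f i) (p : ℕ) : p ≤ f (idxGe f p) :=
  Nat.sInf_mem (⟨p, hf p⟩ : {i | p ≤ f i}.Nonempty)

lemma idxGe_min {p j : ℕ} (hj : j < idxGe f p) : f j < p := by
  have := Nat.notMem_of_lt_sInf (s := {i | p ≤ f i}) hj
  simpa using this

lemma idxGe_step_hit (hf : ∀ i, i ≤ f i) (hmono : StrictMono f) {p : ℕ}
    (h : f (idxGe f p) = p) : idxGe f (p + 1) = idxGe f p + 1 := by
  apply le_antisymm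
  · apply Nat.sInf_le
    show p + 1 ≤ f (idxGe f p + 1)
    have := hmono (show idxGe f p < idxGe f p + 1 by omega)
    omega
  · by_contra hc
    push_neg at hc
    have h2 : idxGe f (p+1) ≤ idxGe f p := by omega
    have h3 : p + 1 ≤ f (idxGe f (p+1)) := idxGe_spec hf (p+1)
    have h4 : f (idxGe f (p+1)) ≤ f (idxGe f p) := hmono.monotone h2
    omega

lemma idxGe_step_miss (hf : ∀ i, i ≤ f i) {p : ℕ}
    (h : f (idxGe f p) ≠ p) : idxGe f (p + 1) = idxGe f p := by
  have h1 : p ≤ f (idxGe f p) := idxGe_spec hf p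
  apply le_antisymm
  · apply Nat.sInf_le
    show p + 1 ≤ f (idxGe f p)
    omega
  · by_contra hc
    push_neg at hc
    have h3 := idxGe_min (f := f) (p := p) hc
    have h4 := idxGe_spec hf (p + 1)
    omega

lemma exists_eq_iff_idxGe (hf : ∀ i, i ≤ f i) (hmono : StrictMono f) {p : ℕ} :
    (∃ i, f i = p) ↔ f (idxGe f p) = p := by
  constructor
  · rintro ⟨i, hi⟩
    have h1 : idxGe f p ≤ i := by
      by_contra hc
      push_neg at hc
      have := idxGe_min (f := f) (p := p) hc
      omega
    have h2 : p ≤ f (idxGe f p) := idxGe_spec hf p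
    have h3 : f (idxGe f p) ≤ f i := hmono.monotone h1
    omega
  · exact fun h => ⟨_, h⟩

end idxGe

lemma Sof_window (x : ℕ → ℕ) (i M : ℕ) :
    Sof x (i + M) = Sof x i + ∑ j ∈ Finset.range M, x (i + j) :=
  Finset.sum_range_add x i M

lemma Zof_window (x : ℕ → ℕ) (i M : ℕ) :
    Zof x (i + M) = Zof x i + ∑ j ∈ Finset.range M, (1 - x (i + j)) :=
  Finset.sum_range_add _ i M

lemma window_compl {x : ℕ → ℕ} (hx : ∀ i, x i ≤ 1) (i M : ℕ) :
    ∑ j ∈ Finset.range M, (1 - x (i + j)) + ∑ j ∈ Finset.range M, x (i + j) = M := by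
  rw [← Finset.sum_add_distrib]
  calc ∑ j ∈ Finset.range M, (1 - x (i + j) + x (i + j))
      = ∑ _j ∈ Finset.range M, 1 :=
        Finset.sum_congr rfl (fun j _ => by have := hx (i + j); omega)
    _ = M := by simp

lemma cnt_psi1 (x : ℕ → ℕ) (q n : ℕ) :
    idxGe (G1 x) (q + n) = idxGe (G1 x) q + ∑ j ∈ Finset.range n, psi1seq x (q + j) := by
  induction n with
  | zero => simp
  | succ n ih =>
    have hrec : idxGe (G1 x) ((q + n) + 1) =
        idxGe (G1 x) (q + n) + psi1seq x (q + n) := by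
      by_cases h : G1 x (idxGe (G1 x) (q + n)) = q + n
      · rw [idxGe_step_hit (G1_ge x) (G1_strictMono x) h]
        have hv : psi1seq x (q + n) = 1 := by
          unfold psi1seq
          rw [if_pos ((exists_eq_iff_idxGe (G1_ge x) (G1_strictMono x)).mpr h)]
        omega
      · rw [idxGe_step_miss (G1_ge x) h]
        have hv : psi1seq x (q + n) = 0 := by
          unfold psi1seq
          rw [if_neg]
          intro hc
          exact h ((exists_eq_iff_idxGe (G1_ge x) (G1_strictMono x)).mp hc)
        omega
    rw [show q + (n + 1) = (q + n) + 1 by ring, Finset.sum_range_succ]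
    omega

lemma cnt_psi0 {x : ℕ → ℕ} (hx : ∀ i, x i ≤ 1) (q n : ℕ) :
    Sof x (idxGe (F0 x) (q + n)) =
      Sof x (idxGe (F0 x) q) + ∑ j ∈ Finset.range n, psi0seq x (q + j) := by
  induction n with
  | zero => simp
  | succ n ih =>
    have hrec : Sof x (idxGe (F0 x) ((q + n) + 1)) =
        Sof x (idxGe (F0 x) (q + n)) + psi0seq x (q + n) := by
      by_cases h : F0 x (idxGe (F0 x) (q + n)) = q + n
      · rw [idxGe_step_hit (F0_ge x) (F0_strictMono x) h]
        rw [Sof_succ]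
        have hv : psi0seq x (q + n) = x (idxGe (F0 x) (q + n)) := by
          unfold psi0seq
          by_cases hval : x (idxGe (F0 x) (q + n)) = 1
          · rw [if_pos ⟨_, h, hval⟩, hval]
          · rw [if_neg]
            · have := hx (idxGe (F0 x) (q + n)); omega
            · rintro ⟨i, hFi, hvi⟩
              have he : i = idxGe (F0 x) (q + n) :=
                (F0_strictMono x).injective (by rw [hFi, h])
              rw [he] at hvi
              exact hval hvi
        omega
      · rw [idxGe_step_miss (F0_ge x) h]
        have hv : psi0seq x (q + n) = 0 := by
          unfold psi0seq
          rw [if_neg]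
          rintro ⟨i, hFi, hvi⟩
          exact h ((exists_eq_iff_idxGe (F0_ge x) (F0_strictMono x)).mp ⟨i, hFi⟩)
        omega
    rw [show q + (n + 1) = (q + n) + 1 by ring, Finset.sum_range_succ]
    omega

/-- balance transfer for ψ1 -/
lemma balanced_psi1 {x : ℕ → ℕ} (hx : ∀ i, x i ≤ 1) (hbal : BalancedSeq x) :
    BalancedSeq (psi1seq x) := by
  intro q r n
  by_contra hcon
  push_neg at hcon
  set Cq := ∑ j ∈ Finset.range n, psi1seq x (q + j) with hCq
  set Cr := ∑ j ∈ Finset.range n, psi1seq x (r + j) with hCr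
  have hC : Cr + 2 ≤ Cq := by omega
  set k1 := idxGe (G1 x) q with hk1def
  set l1 := idxGe (G1 x) r with hl1def
  have hk2 : idxGe (G1 x) (q + n) = k1 + Cq := cnt_psi1 x q n
  have hl2 : idxGe (G1 x) (r + n) = l1 + Cr := cnt_psi1 x r n
  set ZA := ∑ j ∈ Finset.range (Cq - 1), (1 - x (k1 + j)) with hZA
  have hup : Cq + ZA ≤ n := by
    have h1 : G1 x (k1 + (Cq - 1)) < q + n := idxGe_min (by omega)
    have h2 : q ≤ G1 x k1 := idxGe_spec (G1_ge x) q
    have h3 : G1 x (k1 + (Cq - 1)) = G1 x k1 + (Cq - 1) + ZA := by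
      unfold G1
      rw [Zof_window, hZA]
      ring
    omega
  have hdown : ∃ i0 L, L + 1 ≤ Cq ∧ L ≤ Cr + 1 ∧
      n + 1 ≤ L + (∑ j ∈ Finset.range L, (1 - x (i0 + j))) + (Cr + 1 - L) := by
    rcases Nat.eq_zero_or_pos l1 with hl0 | hl0
    · refine ⟨0, Cr, by omega, by omega, ?_⟩
      have h1 : r + n ≤ G1 x (l1 + Cr) := by
        rw [← hl2]; exact idxGe_spec (G1_ge x) (r + n)
      rw [hl0] at h1
      have h3 : G1 x (0 + Cr) = G1 x 0 + Cr + ∑ j ∈ Finset.range Cr, (1 - x (0 + j)) := by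
        unfold G1; rw [Zof_window]; ring
      rw [G1_zero] at h3
      omega
    · refine ⟨l1 - 1, Cr + 1, by omega, le_rfl, ?_⟩
      have h1 : r + n ≤ G1 x (l1 + Cr) := by
        rw [← hl2]; exact idxGe_spec (G1_ge x) (r + n)
      have h2 : G1 x (l1 - 1) < r := idxGe_min (by omega)
      have h3 : G1 x ((l1 - 1) + (Cr + 1)) =
          G1 x (l1 - 1) + (Cr + 1) + ∑ j ∈ Finset.range (Cr + 1), (1 - x ((l1 - 1) + j)) := by
        unfold G1; rw [Zof_window]; ring
      have h4 : (l1 - 1) + (Cr + 1) = l1 + Cr := by omega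
      rw [h4] at h3
      omega
  obtain ⟨i0, L, hLq, hLr, hZB⟩ := hdown
  have hsub : ∑ j ∈ Finset.range L, (1 - x (k1 + j)) ≤ ZA := by
    rw [hZA]
    exact Finset.sum_le_sum_of_subset (Finset.range_subset_range.mpr (by omega))
  have hbalz : ∑ j ∈ Finset.range L, (1 - x (i0 + j)) ≤
      ∑ j ∈ Finset.range L, (1 - x (k1 + j)) + 1 := by
    have hb := hbal k1 i0 L
    have e1 := window_compl hx i0 L
    have e2 := window_compl hx k1 L
    omega
  omega

/-- balance transfer for ψ0 -/
lemma balanced_psi0 {x : ℕ → ℕ} (hx : ∀ i, x i ≤ 1) (hbal : BalancedSeq x) :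
    BalancedSeq (psi0seq x) := by
  intro q r n
  by_contra hcon
  push_neg at hcon
  set Cq := ∑ j ∈ Finset.range n, psi0seq x (q + j) with hCq
  set Cr := ∑ j ∈ Finset.range n, psi0seq x (r + j) with hCr
  have hC : Cr + 2 ≤ Cq := by omega
  set k1 := idxGe (F0 x) q with hk1def
  set l1 := idxGe (F0 x) r with hl1def
  set k2 := idxGe (F0 x) (q + n) with hk2def
  set l2 := idxGe (F0 x) (r + n) with hl2def
  have hk2 : Sof x k2 = Sof x k1 + Cq := cnt_psi0 hx q n
  have hl2 : Sof x l2 = Sof x l1 + Cr := cnt_psi0 hx r n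
  have hkmono : k1 ≤ k2 := by
    apply Nat.sInf_le
    show q ≤ F0 x k2
    have := idxGe_spec (F0_ge x) (q + n)
    rw [← hk2def] at this
    omega
  have hlmono : l1 ≤ l2 := by
    apply Nat.sInf_le
    show r ≤ F0 x l2
    have := idxGe_spec (F0_ge x) (r + n)
    rw [← hl2def] at this
    omega
  have hklt : k1 < k2 := by
    rcases Nat.lt_or_ge k1 k2 with h | h
    · exact h
    · have he : k1 = k2 := by omega
      rw [he] at hk2
      omega
  set M1 := k2 - k1 with hM1
  set M2 := l2 - l1 with hM2
  -- UP estimate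
  have hwin1 : Sof x (k2 - 1) = Sof x k1 + ∑ j ∈ Finset.range (M1 - 1), x (k1 + j) := by
    rw [show k2 - 1 = k1 + (M1 - 1) by omega, Sof_window]
  have hsucc1 : Sof x k2 = Sof x (k2 - 1) + x (k2 - 1) := by
    rw [show k2 = (k2 - 1) + 1 by omega, Sof_succ]
    congr 2 <;> omega
  have hup : M1 + Cq ≤ n + 1 := by
    have h1 : F0 x (k2 - 1) < q + n := idxGe_min (by omega)
    have h2 : q ≤ F0 x k1 := idxGe_spec (F0_ge x) q
    have h3 : F0 x (k2 - 1) = (k2 - 1) + Sof x (k2 - 1) := rfl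
    have h4 : F0 x k1 = k1 + Sof x k1 := rfl
    have h5 := hx (k2 - 1)
    omega
  -- DOWN estimate
  have hdown : M2 + Cr + 1 ≥ n := by
    rcases Nat.eq_zero_or_pos l1 with hl0 | hl0
    · have h1 : r + n ≤ F0 x l2 := by
        rw [hl2def]; exact idxGe_spec (F0_ge x) (r + n)
      have h2 : F0 x l2 = l2 + Sof x l2 := rfl
      have h3 : Sof x l1 = 0 := by rw [hl0]; rfl
      omega
    · have h1 : r + n ≤ F0 x l2 := by
        rw [hl2def]; exact idxGe_spec (F0_ge x) (r + n)
      have h2 : F0 x (l1 - 1) < r := idxGe_min (by omega)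
      have h3 : F0 x l2 = l2 + Sof x l2 := rfl
      have h4 : F0 x (l1 - 1) = (l1 - 1) + Sof x (l1 - 1) := rfl
      have h5 : Sof x l1 = Sof x (l1 - 1) + x (l1 - 1) := by
        rw [show l1 = (l1 - 1) + 1 by omega, Sof_succ]
        congr 2 <;> omega
      have h6 := hx (l1 - 1)
      omega
  have hM12 : M1 ≤ M2 := by omega
  -- balance comparison
  have hfull1 : ∑ j ∈ Finset.range M1, x (k1 + j) = Cq := by
    have := Sof_window x k1 M1
    rw [show k1 + M1 = k2 by omega] at this
    omega
  have hfull2 : ∑ j ∈ Finset.range M2, x (l1 + j) = Cr := by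
    have := Sof_window x l1 M2
    rw [show l1 + M2 = l2 by omega] at this
    omega
  have hsub : ∑ j ∈ Finset.range M1, x (l1 + j) ≤ Cr := by
    rw [← hfull2]
    exact Finset.sum_le_sum_of_subset (Finset.range_subset_range.mpr hM12)
  have hb := hbal k1 l1 M1
  omega

lemma balanced_one : BalancedSeq (fun _ => 1) := by
  intro i1 i2 n
  simp

/-! ### Part I: the descent package -/

def Wd (σ : List Bool) (z : List ℕ) : List ℕ :=
  σ.foldr (fun b w => if b then U1word w else U0word w) z

def Pd (σ : List Bool) (z : List ℕ) : List ℕ :=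
  σ.foldr (fun b w => if b then psi1w w else psi0w w) z

lemma Wd_nil (z : List ℕ) : Wd [] z = z := rfl
lemma Pd_nil (z : List ℕ) : Pd [] z = z := rfl

lemma Wd_cons (b : Bool) (σ : List Bool) (z : List ℕ) :
    Wd (b :: σ) z = if b then U1word (Wd σ z) else U0word (Wd σ z) := rfl

lemma Pd_cons (b : Bool) (σ : List Bool) (z : List ℕ) :
    Pd (b :: σ) z = if b then psi1w (Pd σ z) else psi0w (Pd σ z) := rfl

lemma Wd_snoc (σ : List Bool) (b : Bool) (z : List ℕ) :
    Wd (σ ++ [b]) z = Wd σ (if b then U1word z else U0word z) := by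
  unfold Wd
  rw [List.foldr_append]
  rfl

lemma Pd_snoc (σ : List Bool) (b : Bool) (z : List ℕ) :
    Pd (σ ++ [b]) z = Pd σ (if b then psi1w z else psi0w z) := by
  unfold Pd
  rw [List.foldr_append]
  rfl

lemma Pd_append (σ : List Bool) (u v : List ℕ) :
    Pd σ (u ++ v) = Pd σ u ++ Pd σ v := by
  induction σ with
  | nil => rfl
  | cons b σ ih =>
    rw [Pd_cons, Pd_cons, Pd_cons, ih]
    cases b <;> simp only [if_true, if_false, Bool.false_eq_true] <;>
      exact substWord_append _ _ _

lemma substWord_binary {f : ℕ → List ℕ} (hf : ∀ d c, c ∈ f d → c ≤ 1) :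
    ∀ w : List ℕ, ∀ c ∈ substWord f w, c ≤ 1 := by
  intro w
  induction w with
  | nil => intro c hc; simp [substWord] at hc
  | cons d w ih =>
    intro c hc
    rw [substWord_cons] at hc
    rcases List.mem_append.mp hc with h | h
    · exact hf d c h
    · exact ih c h

lemma psiBlock0_binary : ∀ d c, c ∈ psiBlock0 d → c ≤ 1 := by
  intro d c hc; unfold psiBlock0 at hc; split at hc <;> simp at hc <;> omega

lemma psiBlock1_binary : ∀ d c, c ∈ psiBlock1 d → c ≤ 1 := by
  intro d c hc; unfold psiBlock1 at hc; split at hc <;> simp at hc <;> omega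

lemma substBlock0_binary : ∀ d c, c ∈ substBlock0 d → c ≤ 1 := by
  intro d c hc; unfold substBlock0 at hc; split at hc <;> simp at hc <;> omega

lemma substBlock1_binary : ∀ d c, c ∈ substBlock1 d → c ≤ 1 := by
  intro d c hc; unfold substBlock1 at hc; split at hc <;> simp at hc <;> omega

lemma Pd_binary (σ : List Bool) {z : List ℕ} (hz : ∀ c ∈ z, c ≤ 1) :
    ∀ c ∈ Pd σ z, c ≤ 1 := by
  induction σ with
  | nil => exact hz
  | cons b σ ih =>
    rw [Pd_cons]
    cases b
    · simpa [psi0w] using substWord_binary psiBlock0_binary (Pd σ z)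
    · simpa [psi1w] using substWord_binary psiBlock1_binary (Pd σ z)

lemma Wd_binary (σ : List Bool) {z : List ℕ} (hz : ∀ c ∈ z, c ≤ 1) :
    ∀ c ∈ Wd σ z, c ≤ 1 := by
  induction σ with
  | nil => exact hz
  | cons b σ ih =>
    rw [Wd_cons]
    cases b
    · simpa [U0word] using substWord_binary substBlock0_binary (Wd σ z)
    · simpa [U1word] using substWord_binary substBlock1_binary (Wd σ z)

lemma substWord_mem {f : ℕ → List ℕ} {d : ℕ} {w : List ℕ} (hd : d ∈ w)
    {c : ℕ} (hc : c ∈ f d) : c ∈ substWord f w := by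
  induction w with
  | nil => simp at hd
  | cons e w ih =>
    rw [substWord_cons]
    rcases List.mem_cons.mp hd with rfl | h
    · exact List.mem_append.mpr (Or.inl hc)
    · exact List.mem_append.mpr (Or.inr (ih h))

lemma Wd_mem_one (σ : List Bool) {z : List ℕ} (hz : (1:ℕ) ∈ z) :
    (1:ℕ) ∈ Wd σ z := by
  induction σ with
  | nil => exact hz
  | cons b σ ih =>
    rw [Wd_cons]
    cases b
    · simpa [U0word] using substWord_mem ih (show (1:ℕ) ∈ substBlock0 1 by simp [substBlock0])
    · simpa [U1word] using substWord_mem ih (show (1:ℕ) ∈ substBlock1 1 by simp [substBlock1])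

lemma sW_Farey (σ : List Bool) : IsFarey (Wd σ [0,1]) := by
  induction σ with
  | nil => exact IsFarey.base
  | cons b σ ih =>
    rw [Wd_cons]
    cases b
    · simpa using IsFarey.u0 ih
    · simpa using IsFarey.u1 ih

lemma P0_ends (σ : List Bool) : ∃ C, Pd σ [0] = C ++ [0] ∧ ∀ c ∈ C, c ≤ 1 := by
  induction σ with
  | nil => exact ⟨[], rfl, by simp⟩
  | cons b σ ih =>
    obtain ⟨C, hC, hCbin⟩ := ih
    rw [Pd_cons, hC]
    cases b
    · refine ⟨psi0w C, ?_, substWord_binary psiBlock0_binary C⟩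
      simp only [if_false, Bool.false_eq_true]
      rw [show psi0w (C ++ [0]) = psi0w C ++ psi0w [0] from substWord_append _ _ _]
      rfl
    · refine ⟨psi1w C ++ [1], ?_, ?_⟩
      · simp only [if_true]
        rw [show psi1w (C ++ [0]) = psi1w C ++ psi1w [0] from substWord_append _ _ _]
        rw [List.append_assoc]
        rfl
      · intro c hc
        rcases List.mem_append.mp hc with h | h
        · exact substWord_binary psiBlock1_binary C c h
        · simp at h; omega

lemma P1_head (σ : List Bool) : ∃ T, Pd σ [1] = 1 :: T := by
  induction σ with
  | nil => exact ⟨[], rfl⟩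
  | cons b σ ih =>
    obtain ⟨T, hT⟩ := ih
    rw [Pd_cons, hT]
    cases b
    · exact ⟨0 :: psi0w T, by simp only [if_false, Bool.false_eq_true]; rfl⟩
    · exact ⟨psi1w T, by simp only [if_true]; rfl⟩

lemma P1_ne (σ : List Bool) : Pd σ [1] ≠ [] := by
  obtain ⟨T, hT⟩ := P1_head σ
  rw [hT]; simp

lemma P0_ne (σ : List Bool) : Pd σ [0] ≠ [] := by
  obtain ⟨C, hC, _⟩ := P0_ends σ
  rw [hC]; simp

lemma sW_ne (σ : List Bool) : Wd σ [0,1] ≠ [] := by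
  intro h
  have := Wd_mem_one σ (show (1:ℕ) ∈ [0,1] by simp)
  rw [h] at this
  simp at this

/-- base case of `maxRot` computation -/
lemma maxRot_base : maxRot [0,1] = [1,0] := by
  apply maxRot_unique (by simp)
  · exact ⟨1, by rw [show ([0,1] : List ℕ).rotate 1 = [1,0] from rfl]⟩
  · intro j
    have h2 : ([0,1] : List ℕ).rotate j = [0,1].rotate (j % 2) := by
      rw [← List.rotate_mod]
      rfl
    have hj : j % 2 = 0 ∨ j % 2 = 1 := by omega
    rcases hj with hj | hj <;> rw [h2, hj]
    · rw [List.rotate_zero]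
      intro hc
      cases hc with
      | rel h => omega
    · rw [show ([0,1] : List ℕ).rotate 1 = [1,0] from rfl]
      exact lex_irrefl _

/-- the key maxRot formula -/
lemma maxRot_sW (σ : List Bool) :
    maxRot (Wd σ [0,1]) = Pd σ [1] ++ Pd σ [0] := by
  induction σ with
  | nil => exact maxRot_base
  | cons b σ ih =>
    have hbin : ∀ c ∈ Wd σ [0,1], c ≤ 1 := Wd_binary σ (by simp)
    have h1 : (1:ℕ) ∈ Wd σ [0,1] := Wd_mem_one σ (by simp)
    have hps : Pd σ [1] ++ Pd σ [0] = Pd σ [1,0] := by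
      rw [← Pd_append]; rfl
    rw [Wd_cons, Pd_cons, Pd_cons]
    cases b
    · simp only [if_false, Bool.false_eq_true]
      rw [maxRot_U0 hbin h1, ih, hps, ← hps]
      exact substWord_append _ _ _
    · simp only [if_true]
      rw [maxRot_U1 hbin h1, ih, hps, ← hps]
      exact substWord_append _ _ _

/-! J-identities -/

lemma J0 {z : List ℕ} (hz : z ≠ []) :
    periodic (U0word z) = wordThen [0] (periodic (psi0w z)) := by
  have hU : U0word z ≠ [] := substWord_ne_nil substBlock0_ne_nil hz
  have hpsi : psi0w z ≠ [] := substWord_ne_nil psiBlock0_ne_nil hz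
  symm
  apply periodic_fixpt hU
  calc wordThen [0] (periodic (psi0w z))
      = wordThen [0] (wordThen (psi0w z) (periodic (psi0w z))) := by
        rw [← periodic_unfold hpsi]
    _ = wordThen ([0] ++ psi0w z) (periodic (psi0w z)) := by rw [wordThen_append]
    _ = wordThen (U0word z ++ [0]) (periodic (psi0w z)) := by rw [U0_id]
    _ = wordThen (U0word z) (wordThen [0] (periodic (psi0w z))) := by
        rw [wordThen_append]

lemma J1 {z : List ℕ} (hz : z ≠ []) :
    periodic (psi1w z) = wordThen [1] (periodic (U1word z)) := by
  have hU : U1word z ≠ [] := substWord_ne_nil substBlock1_ne_nil hz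
  have hpsi : psi1w z ≠ [] := substWord_ne_nil psiBlock1_ne_nil hz
  symm
  apply periodic_fixpt hpsi
  calc wordThen [1] (periodic (U1word z))
      = wordThen [1] (wordThen (U1word z) (periodic (U1word z))) := by
        rw [← periodic_unfold hU]
    _ = wordThen ([1] ++ U1word z) (periodic (U1word z)) := by rw [wordThen_append]
    _ = wordThen (psi1w z ++ [1]) (periodic (U1word z)) := by rw [U1_id]
    _ = wordThen (psi1w z) (wordThen [1] (periodic (U1word z))) := by
        rw [wordThen_append]

/-! ### Part I2: the right-endpoint identity -/

lemma KR : ∀ σ : List Bool,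
    wordThen (wordPlus (Pd σ [0])) (periodic (Wd σ [0,1])) =
      periodic (Pd σ [1] ++ Pd σ [0]) := by
  intro σ
  induction σ with
  | nil =>
    show wordThen (wordPlus [0]) (periodic [0,1]) = periodic ([1] ++ [0])
    rw [show wordPlus [0] = [1] from rfl]
    apply periodic_fixpt (show ([1] ++ [0] : List ℕ) ≠ [] by simp)
    conv_rhs => rw [← wordThen_append]
    show wordThen [1] (periodic [0,1]) = wordThen ([1] ++ [0,1]) (periodic [0,1])
    rw [wordThen_append, ← periodic_unfold (by simp : ([0,1] : List ℕ) ≠ [])]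
  | cons b σ ih =>
    obtain ⟨C, hC, hCbin⟩ := P0_ends σ
    have hsne : Wd σ [0,1] ≠ [] := sW_ne σ
    have hsbin : ∀ c ∈ Wd σ [0,1], c ≤ 1 := Wd_binary σ (by simp)
    have hWne : Pd σ [1] ++ Pd σ [0] ≠ [] := by
      intro h; rcases List.append_eq_nil_iff.mp h with ⟨h1, _⟩; exact P1_ne σ h1
    have hWbin : ∀ c ∈ Pd σ [1] ++ Pd σ [0], c ≤ 1 := by
      intro c hc
      rcases List.mem_append.mp hc with h | h
      · exact Pd_binary σ (by simp) c h
      · exact Pd_binary σ (by simp) c h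
    have hC1bin : ∀ c ∈ C ++ [1], c ≤ 1 := by
      intro c hc
      rcases List.mem_append.mp hc with h | h
      · exact hCbin c h
      · simp at h; omega
    have hplus : wordPlus (Pd σ [0]) = C ++ [1] := by
      rw [hC, wordPlus_append _ (by simp)]
      rfl
    simp only [Wd_cons, Pd_cons]
    cases b
    · simp only [if_false, Bool.false_eq_true]
      have e0 : psi0w (Pd σ [0]) = psi0w C ++ [0] := by
        rw [hC, show psi0w (C ++ [0]) = psi0w C ++ psi0w [0] from substWord_append _ _ _]
        rfl
      have eplus : wordPlus (psi0w (Pd σ [0])) = psi0w C ++ [1] := by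
        rw [e0, wordPlus_append _ (by simp)]
        rfl
      have e1 : psi0w (C ++ [1]) = psi0w C ++ [1, 0] := substWord_append psiBlock0 C [1]
      rw [eplus]
      calc wordThen (psi0w C ++ [1]) (periodic (U0word (Wd σ [0,1])))
          = wordThen (psi0w C ++ [1]) (wordThen [0] (periodic (psi0w (Wd σ [0,1])))) := by
            rw [← J0 hsne]
        _ = wordThen ((psi0w C ++ [1]) ++ [0]) (periodic (psi0w (Wd σ [0,1]))) :=
            (wordThen_append _ _ _).symm
        _ = wordThen (psi0w (C ++ [1])) (psi0seq (periodic (Wd σ [0,1]))) := by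
            rw [e1, List.append_assoc, psi0seq_periodic hsne hsbin]
            rfl
        _ = psi0seq (wordThen (C ++ [1]) (periodic (Wd σ [0,1]))) := by
            rw [psi0seq_wordThen hC1bin]
        _ = psi0seq (periodic (Pd σ [1] ++ Pd σ [0])) := by rw [← hplus, ih]
        _ = periodic (psi0w (Pd σ [1] ++ Pd σ [0])) := psi0seq_periodic hWne hWbin
        _ = periodic (psi0w (Pd σ [1]) ++ psi0w (Pd σ [0])) := by
            rw [show psi0w (Pd σ [1] ++ Pd σ [0]) = psi0w (Pd σ [1]) ++ psi0w (Pd σ [0])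
              from substWord_append _ _ _]
    · simp only [if_true]
      have e0 : psi1w (Pd σ [0]) = psi1w C ++ [1, 0] := by
        rw [hC, show psi1w (C ++ [0]) = psi1w C ++ psi1w [0] from substWord_append _ _ _]
        rfl
      have eplus : wordPlus (psi1w (Pd σ [0])) = psi1w C ++ [1, 1] := by
        rw [e0, wordPlus_append _ (by simp)]
        rfl
      have e1 : psi1w (C ++ [1]) = psi1w C ++ [1] := substWord_append psiBlock1 C [1]
      rw [eplus]
      calc wordThen (psi1w C ++ [1, 1]) (periodic (U1word (Wd σ [0,1])))
          = wordThen ((psi1w C ++ [1]) ++ [1]) (periodic (U1word (Wd σ [0,1]))) := by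
            rw [List.append_assoc]
            rfl
        _ = wordThen (psi1w C ++ [1]) (wordThen [1] (periodic (U1word (Wd σ [0,1])))) :=
            wordThen_append _ _ _
        _ = wordThen (psi1w (C ++ [1])) (psi1seq (periodic (Wd σ [0,1]))) := by
            rw [e1, ← J1 hsne, psi1seq_periodic hsne hsbin]
        _ = psi1seq (wordThen (C ++ [1]) (periodic (Wd σ [0,1]))) := by
            rw [psi1seq_wordThen hC1bin]
        _ = psi1seq (periodic (Pd σ [1] ++ Pd σ [0])) := by rw [← hplus, ih]
        _ = periodic (psi1w (Pd σ [1] ++ Pd σ [0])) := psi1seq_periodic hWne hWbin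
        _ = periodic (psi1w (Pd σ [1]) ++ psi1w (Pd σ [0])) := by
            rw [show psi1w (Pd σ [1] ++ Pd σ [0]) = psi1w (Pd σ [1]) ++ psi1w (Pd σ [0])
              from substWord_append _ _ _]

/-! ### Part I3: the high and low sequences -/

noncomputable def hiSeq (σ : List Bool) : ℕ → ℕ := periodic (Pd σ [1])
noncomputable def loSeq (σ : List Bool) : ℕ → ℕ :=
  wordThen (Pd σ [1]) (periodic (Pd σ [0]))

lemma P1_binary (σ : List Bool) : ∀ c ∈ Pd σ [1], c ≤ 1 :=
  Pd_binary σ (by simp)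

lemma P0_binary (σ : List Bool) : ∀ c ∈ Pd σ [0], c ≤ 1 :=
  Pd_binary σ (by simp)

lemma getD_le_one : ∀ {w : List ℕ}, (∀ c ∈ w, c ≤ 1) → ∀ n, w.getD n 0 ≤ 1 := by
  intro w
  induction w with
  | nil => intro _ n; simp
  | cons c w ih =>
    intro hw n
    cases n with
    | zero => simpa using hw c (by simp)
    | succ n =>
      rw [List.getD_cons_succ]
      exact ih (fun d hd => hw d (by simp [hd])) n

lemma periodic_binary {w : List ℕ} (hw : ∀ c ∈ w, c ≤ 1) (n : ℕ) :
    periodic w n ≤ 1 := getD_le_one hw _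

lemma wordThen_binary {w : List ℕ} (hw : ∀ c ∈ w, c ≤ 1) {x : ℕ → ℕ}
    (hx : ∀ n, x n ≤ 1) (n : ℕ) : wordThen w x n ≤ 1 := by
  unfold wordThen
  split
  · exact getD_le_one hw _
  · exact hx _

lemma hi_binary (σ : List Bool) (n : ℕ) : hiSeq σ n ≤ 1 :=
  periodic_binary (P1_binary σ) n

lemma lo_binary (σ : List Bool) (n : ℕ) : loSeq σ n ≤ 1 :=
  wordThen_binary (P1_binary σ) (fun _ => periodic_binary (P0_binary σ) _) n

lemma lo_zero (σ : List Bool) : loSeq σ 0 = 1 := by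
  obtain ⟨T, hT⟩ := P1_head σ
  unfold loSeq
  rw [hT]
  unfold wordThen
  rw [if_pos (by simp)]
  rfl

lemma hi_zero (σ : List Bool) : hiSeq σ 0 = 1 := by
  obtain ⟨T, hT⟩ := P1_head σ
  unfold hiSeq
  rw [hT]
  unfold periodic
  have h : 0 % (1 :: T).length = 0 := Nat.zero_mod _
  rw [h]
  rfl

/-! the E-identities -/

lemma E2 (σ : List Bool) :
    periodic (maxRot (Wd σ [0,1])) = hiSeq (σ ++ [false]) := by
  unfold hiSeq
  rw [Pd_snoc, show (if (false : Bool) then psi1w [1] else psi0w [1]) = psi0w [1]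
    from rfl, show psi0w [1] = ([1] ++ [0] : List ℕ) from rfl, Pd_append, maxRot_sW]

lemma E3 (σ : List Bool) :
    wordThen (wordPlus (maxRot (Wd σ [0,1]))) (periodic (Wd σ [0,1])) =
      loSeq (σ ++ [true]) := by
  unfold loSeq
  rw [Pd_snoc, Pd_snoc,
    show (if (true : Bool) then psi1w [1] else psi0w [1]) = [1] from rfl,
    show (if (true : Bool) then psi1w [0] else psi0w [0]) = ([1] ++ [0] : List ℕ)
      from rfl, Pd_append, maxRot_sW,
    wordPlus_append _ (P0_ne σ), wordThen_append, KR σ]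

lemma E4a (σ : List Bool) : loSeq (σ ++ [false]) = loSeq σ := by
  unfold loSeq
  rw [Pd_snoc, Pd_snoc,
    show (if (false : Bool) then psi1w [1] else psi0w [1]) = ([1] ++ [0] : List ℕ)
      from rfl,
    show (if (false : Bool) then psi1w [0] else psi0w [0]) = [0] from rfl,
    Pd_append, wordThen_append, ← periodic_unfold (P0_ne σ)]

lemma E4b (σ : List Bool) : hiSeq (σ ++ [true]) = hiSeq σ := by
  unfold hiSeq
  rw [Pd_snoc, show (if (true : Bool) then psi1w [1] else psi0w [1]) = [1] from rfl]

/-! front-peel identities -/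

lemma hi_cons_false (σ : List Bool) : hiSeq (false :: σ) = psi0seq (hiSeq σ) := by
  unfold hiSeq
  rw [Pd_cons, show (if (false : Bool) then psi1w (Pd σ [1]) else psi0w (Pd σ [1]))
    = psi0w (Pd σ [1]) from rfl]
  rw [psi0seq_periodic (P1_ne σ) (P1_binary σ)]

lemma hi_cons_true (σ : List Bool) : hiSeq (true :: σ) = psi1seq (hiSeq σ) := by
  unfold hiSeq
  rw [Pd_cons, show (if (true : Bool) then psi1w (Pd σ [1]) else psi0w (Pd σ [1]))
    = psi1w (Pd σ [1]) from rfl]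
  rw [psi1seq_periodic (P1_ne σ) (P1_binary σ)]

lemma lo_cons_false (σ : List Bool) : loSeq (false :: σ) = psi0seq (loSeq σ) := by
  unfold loSeq
  rw [Pd_cons, Pd_cons,
    show (if (false : Bool) then psi1w (Pd σ [1]) else psi0w (Pd σ [1]))
      = psi0w (Pd σ [1]) from rfl,
    show (if (false : Bool) then psi1w (Pd σ [0]) else psi0w (Pd σ [0]))
      = psi0w (Pd σ [0]) from rfl]
  rw [psi0seq_wordThen (P1_binary σ), psi0seq_periodic (P0_ne σ) (P0_binary σ)]

lemma lo_cons_true (σ : List Bool) : loSeq (true :: σ) = psi1seq (loSeq σ) := by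
  unfold loSeq
  rw [Pd_cons, Pd_cons,
    show (if (true : Bool) then psi1w (Pd σ [1]) else psi0w (Pd σ [1]))
      = psi1w (Pd σ [1]) from rfl,
    show (if (true : Bool) then psi1w (Pd σ [0]) else psi0w (Pd σ [0]))
      = psi1w (Pd σ [0]) from rfl]
  rw [psi1seq_wordThen (P1_binary σ), psi1seq_periodic (P0_ne σ) (P0_binary σ)]

/-! hiSeq is balanced -/

lemma hi_balanced (σ : List Bool) : BalancedSeq (hiSeq σ) := by
  induction σ with
  | nil =>
    have h : hiSeq [] = fun _ => 1 := by
      funext n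
      unfold hiSeq periodic
      simp [Pd_nil, Nat.mod_one]
    rw [h]
    intro i1 i2 n
    simp
  | cons b σ ih =>
    cases b
    · rw [hi_cons_false]
      exact balanced_psi0 (hi_binary σ) ih
    · rw [hi_cons_true]
      exact balanced_psi1 (hi_binary σ) ih

/-! the common-prefix invariant -/

lemma cp_inv (σ : List Bool) : ∃ m, σ.length + 1 ≤ m ∧
    (∀ i < m, loSeq σ i = hiSeq σ i) ∧ loSeq σ m = 0 ∧ hiSeq σ m = 1 := by
  induction σ with
  | nil =>
    refine ⟨1, le_rfl, ?_, ?_, ?_⟩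
    · intro i hi
      have hi0 : i = 0 := by omega
      rw [hi0, lo_zero, hi_zero]
    · show wordThen (Pd [] [1]) (periodic (Pd [] [0])) 1 = 0
      rw [Pd_nil, Pd_nil]
      unfold wordThen
      rw [if_neg (by simp)]
      rfl
    · show periodic (Pd [] [1]) 1 = 1
      rw [Pd_nil]
      unfold periodic
      simp
  | cons b σ ih =>
    obtain ⟨m, hm, hag, hlo, hhi⟩ := ih
    cases b
    · -- psi0 step
      obtain ⟨h1, h2, h3⟩ := agree_psi0 hag hlo hhi
      refine ⟨F0 (loSeq σ) m, ?_, ?_, ?_, ?_⟩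
      · have hx0 : loSeq σ 0 = 1 := lo_zero σ
        have hS : 1 ≤ Sof (loSeq σ) m := by
          have h0m : (0 : ℕ) ∈ Finset.range m := Finset.mem_range.mpr (by omega)
          calc 1 = loSeq σ 0 := hx0.symm
            _ ≤ ∑ t ∈ Finset.range m, loSeq σ t :=
              Finset.single_le_sum (fun i _ => Nat.zero_le _) h0m
        show (false :: σ).length + 1 ≤ F0 (loSeq σ) m
        unfold F0
        simp only [List.length_cons]
        omega
      · intro i hi
        rw [lo_cons_false, hi_cons_false]
        exact h1 i hi
      · rw [lo_cons_false]; exact h2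
      · rw [hi_cons_false]; exact h3
    · -- psi1 step
      obtain ⟨h1, h2, h3⟩ := agree_psi1 hag hlo hhi
      refine ⟨G1 (loSeq σ) m + 1, ?_, ?_, ?_, ?_⟩
      · have := G1_ge (loSeq σ) m
        show (true :: σ).length + 1 ≤ G1 (loSeq σ) m + 1
        simp only [List.length_cons]
        omega
      · intro i hi
        rw [lo_cons_true, hi_cons_true]
        exact h1 i hi
      · rw [lo_cons_true]; exact h2
      · rw [hi_cons_true]; exact h3

/-! ### Part J: the descent and the main theorem -/

lemma lo_nil {n : ℕ} (hn : 1 ≤ n) : loSeq [] n = 0 := by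
  show wordThen (Pd [] [1]) (periodic (Pd [] [0])) n = 0
  rw [Pd_nil, Pd_nil]
  unfold wordThen
  rw [if_neg (by simp; omega)]
  unfold periodic
  simp

lemma hi_nil (n : ℕ) : hiSeq [] n = 1 := by
  show periodic (Pd [] [1]) n = 1
  rw [Pd_nil]
  unfold periodic
  simp [Nat.mod_one]

lemma descent {a : ℕ → ℕ} (ha0 : a 0 = 1) (hbin : ∀ i, a i ≤ 1) (hE : InEbar a) :
    ∀ t : ℕ, ∃ σ : List Bool, σ.length = t ∧
      seqLe (loSeq σ) a ∧ seqLe a (hiSeq σ) := by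
  intro t
  induction t with
  | zero =>
    refine ⟨[], rfl, ?_, ?_⟩
    · by_cases he : loSeq [] = a
      · exact Or.inr he
      rcases seqLt_or_gt_of_ne he with h | h
      · exact Or.inl h
      · exfalso
        obtain ⟨n, hag, hlt⟩ := h
        rcases Nat.eq_zero_or_pos n with rfl | hn
        · rw [lo_zero, ha0] at hlt; omega
        · rw [lo_nil hn] at hlt; omega
    · by_cases he : a = hiSeq []
      · exact Or.inr he
      rcases seqLt_or_gt_of_ne he with h | h
      · exact Or.inl h
      · exfalso
        obtain ⟨n, hag, hlt⟩ := h
        have := hbin n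
        rw [hi_nil] at hlt
        omega
  | succ t ih =>
    obtain ⟨σ, hlen, hlo, hhi⟩ := ih
    have hF := hE (Wd σ [0,1]) (sW_Farey σ)
    rw [E2 σ, E3 σ] at hF
    by_cases h1 : seqLt (hiSeq (σ ++ [false])) a
    · have h2 : ¬ seqLt a (loSeq (σ ++ [true])) := fun h2 => hF ⟨h1, h2⟩
      refine ⟨σ ++ [true], by simp [hlen], seqLe_of_not_seqLt h2, ?_⟩
      rw [E4b]
      exact hhi
    · refine ⟨σ ++ [false], by simp [hlen], ?_, seqLe_of_not_seqLt h1⟩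
      rw [E4a]
      exact hlo

/-- If `β ∈ Ē` (i.e. for no Farey word `s` does `L(s)^∞ ≺ α(β) ≺ L(s)^+s^∞` hold),
then `α(β)` is balanced. -/
theorem balanced_of_mem_Ebar (β : ℝ) (hβ : β ∈ Set.Ioc (1 : ℝ) 2)
    (a : ℕ → ℕ) (ha : IsQuasiGreedy β a) (hE : InEbar a) :
    BalancedSeq a := by
  obtain ⟨hbin, hpi, hshift⟩ := ha
  have ha0 : a 0 = 1 := by
    obtain ⟨hpos, _⟩ := hshift 1 le_rfl
    obtain ⟨n, hag, hlt⟩ := hpos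
    have hs1 : shift^[1] a n = a (n + 1) := congrFun (shift_iterate a 1) n
    have han1 : 1 ≤ a (n + 1) := by
      have h0 : (fun _ : ℕ => (0:ℕ)) n = 0 := rfl
      omega
    by_contra hc
    have ha00 : a 0 = 0 := by have := hbin 0; omega
    obtain ⟨_, hle⟩ := hshift (n + 1) (by omega)
    have hs0 : shift^[n+1] a 0 = a (n + 1) := by
      simpa using congrFun (shift_iterate a (n+1)) 0
    rcases hle with h | h
    · obtain ⟨k, kag, klt⟩ := h
      rcases Nat.eq_zero_or_pos k with rfl | hk
      · rw [hs0] at klt; omega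
      · have := kag 0 hk
        rw [hs0] at this
        omega
    · have := congrFun h 0
      rw [hs0] at this
      omega
  intro i1 i2 n
  obtain ⟨σ, hlen, hlo, hhi⟩ := descent ha0 hbin hE (i1 + i2 + n + 1)
  obtain ⟨m, hm, hag, _, _⟩ := cp_inv σ
  have hagree : ∀ i < m, a i = hiSeq σ i := seq_squeeze hlo hhi hag
  have e1 : ∑ j ∈ Finset.range n, a (i1 + j) =
      ∑ j ∈ Finset.range n, hiSeq σ (i1 + j) :=
    Finset.sum_congr rfl (fun j hj => hagree _ (by
      have := Finset.mem_range.mp hj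
      omega))
  have e2 : ∑ j ∈ Finset.range n, a (i2 + j) =
      ∑ j ∈ Finset.range n, hiSeq σ (i2 + j) :=
    Finset.sum_congr rfl (fun j hj => hagree _ (by
      have := Finset.mem_range.mp hj
      omega))
  rw [e1, e2]
  exact hi_balanced σ i1 i2 n

end
end

section
/- Let β, β̂ ∈ (1,2] be bases such that 0α(β) = U_0(α(β̂)), where 0α denotes α preceded by the digit 0. Let z, ẑ ∈ {0,1}^ℕ be sequences with z = U_0(ẑ). Then σ^n(z) ≼ α(β) for all n ≥ 0 if and only if σ^k(ẑ) ≼ α(β̂) for all k ≥ 0. -/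
open scoped Classical ENNReal
open MeasureTheory Filter

noncomputable section

namespace UB0aux

lemma shift_iter_succ (u : ℕ → ℕ) (k : ℕ) : shift (shift^[k] u) = shift^[k + 1] u :=
  (Function.iterate_succ_apply' shift k u).symm

lemma shift_iter (u : ℕ → ℕ) (k : ℕ) : shift^[k] u = fun n => u (n + k) := by
  induction k with
  | zero => funext n; simp
  | succ k ih =>
    rw [Function.iterate_succ_apply', ih]
    funext n
    show u (n + 1 + k) = u (n + (k + 1))
    congr 1
    omega

lemma shift_consSeq (c : ℕ) (u : ℕ → ℕ) : shift (consSeq c u) = u := by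
  funext n
  simp [shift, consSeq]

lemma consSeq_head_shift (u : ℕ → ℕ) : consSeq (u 0) (shift u) = u := by
  funext n
  cases n with
  | zero => simp [consSeq]
  | succ m => simp [consSeq, shift]

lemma consSeq_tail_inj {c : ℕ} {u v : ℕ → ℕ} (h : consSeq c u = consSeq c v) : u = v := by
  funext n
  have := congrFun h (n + 1)
  simpa [consSeq] using this

lemma seqLt_irrefl (u : ℕ → ℕ) : ¬ seqLt u u := fun ⟨_, _, h⟩ => lt_irrefl _ h

lemma seqLt_trans {a b c : ℕ → ℕ} (h1 : seqLt a b) (h2 : seqLt b c) : seqLt a c := by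
  obtain ⟨m, hm1, hm2⟩ := h1
  obtain ⟨n, hn1, hn2⟩ := h2
  rcases lt_trichotomy m n with h | h | h
  · refine ⟨m, fun i hi => (hm1 i hi).trans (hn1 i (hi.trans h)), ?_⟩
    rw [← hn1 m h]; exact hm2
  · subst h
    exact ⟨m, fun i hi => (hm1 i hi).trans (hn1 i hi), hm2.trans hn2⟩
  · refine ⟨n, fun i hi => (hm1 i (hi.trans h)).trans (hn1 i hi), ?_⟩
    rw [hm1 n h]; exact hn2

lemma seqLt_asymm {a b : ℕ → ℕ} (h1 : seqLt a b) (h2 : seqLt b a) : False :=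
  seqLt_irrefl a (seqLt_trans h1 h2)

lemma seq_trichotomy (a b : ℕ → ℕ) : seqLt a b ∨ a = b ∨ seqLt b a := by
  by_cases h : a = b
  · exact Or.inr (Or.inl h)
  · have hne : ∃ n, a n ≠ b n := by
      by_contra hc
      push_neg at hc
      exact h (funext hc)
    have hn : a (Nat.find hne) ≠ b (Nat.find hne) := Nat.find_spec hne
    have hmin : ∀ i < Nat.find hne, a i = b i := fun i hi => not_not.mp (Nat.find_min hne hi)
    rcases lt_or_gt_of_ne hn with h' | h'
    · exact Or.inl ⟨Nat.find hne, hmin, h'⟩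
    · exact Or.inr (Or.inr ⟨Nat.find hne, fun i hi => (hmin i hi).symm, h'⟩)

lemma seqLe_trans {a b c : ℕ → ℕ} (h1 : seqLe a b) (h2 : seqLe b c) : seqLe a c := by
  rcases h1 with h1 | rfl
  · rcases h2 with h2 | rfl
    · exact Or.inl (seqLt_trans h1 h2)
    · exact Or.inl h1
  · exact h2

lemma seqLt_cons_iff {c : ℕ} {u v : ℕ → ℕ} :
    seqLt (consSeq c u) (consSeq c v) ↔ seqLt u v := by
  constructor
  · rintro ⟨n, h1, h2⟩
    cases n with
    | zero => simp [consSeq] at h2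
    | succ m =>
      refine ⟨m, fun i hi => ?_, ?_⟩
      · have := h1 (i + 1) (by omega)
        simpa [consSeq] using this
      · simpa [consSeq] using h2
  · rintro ⟨n, h1, h2⟩
    refine ⟨n + 1, fun i hi => ?_, by simpa [consSeq] using h2⟩
    cases i with
    | zero => simp [consSeq]
    | succ j => simpa [consSeq] using h1 j (by omega)

lemma seqLe_cons_iff {c : ℕ} {u v : ℕ → ℕ} :
    seqLe (consSeq c u) (consSeq c v) ↔ seqLe u v := by
  constructor
  · rintro (h | h)
    · exact Or.inl (seqLt_cons_iff.mp h)
    · exact Or.inr (consSeq_tail_inj h)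
  · rintro (h | rfl)
    · exact Or.inl (seqLt_cons_iff.mpr h)
    · exact Or.inr rfl

lemma seqLt_cons01 (u v : ℕ → ℕ) : seqLt (consSeq 0 u) (consSeq 1 v) :=
  ⟨0, fun i hi => absurd hi (by omega), by simp [consSeq]⟩

lemma flatten_len_ge (l : List (List ℕ)) (h : ∀ x ∈ l, x ≠ []) :
    l.length ≤ l.flatten.length := by
  induction l with
  | nil => simp
  | cons x xs ih =>
    simp only [List.flatten_cons, List.length_append, List.length_cons]
    have hx : x ≠ [] := h x (by simp)
    have h1 : 1 ≤ x.length := List.length_pos_iff.mpr hx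
    have h2 := ih (fun y hy => h y (by simp [hy]))
    omega

lemma substSeq_getD (f : ℕ → List ℕ) (hf : ∀ c, f c ≠ []) (a : ℕ → ℕ)
    (m n : ℕ) (h : n < m) :
    (((List.range m).map fun i => f (a i)).flatten).getD n 0 = substSeq f a n := by
  have hm : m = (n + 1) + (m - (n + 1)) := by omega
  rw [substSeq]
  conv_lhs => rw [hm]
  rw [List.range_add, List.map_append, List.flatten_append]
  have h1 : ∀ x ∈ (List.range (n + 1)).map fun i => f (a i), x ≠ [] := by
    intro x hx
    obtain ⟨i, _, rfl⟩ := List.mem_map.mp hx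
    exact hf _
  have hlen : n < (((List.range (n + 1)).map fun i => f (a i)).flatten).length := by
    have := flatten_len_ge _ h1
    simp only [List.length_map, List.length_range] at this
    omega
  rw [List.getD_append _ _ _ _ hlen]

lemma substSeq_cons (f : ℕ → List ℕ) (hf : ∀ c, f c ≠ []) (a : ℕ → ℕ) :
    substSeq f a = wordThen (f (a 0)) (substSeq f (shift a)) := by
  funext n
  have hexp : ((List.range (n + 1)).map fun i => f (a i)).flatten
      = f (a 0) ++ ((List.range n).map fun i => f (shift a i)).flatten := by
    rw [List.range_succ_eq_map, List.map_cons, List.flatten_cons, List.map_map]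
    rfl
  by_cases hn : n < (f (a 0)).length
  · rw [substSeq, hexp, List.getD_append _ _ _ _ hn, wordThen, if_pos hn]
  · push_neg at hn
    rw [substSeq, hexp, List.getD_append_right _ _ _ _ hn, wordThen, if_neg (by omega)]
    have hlen1 : 1 ≤ (f (a 0)).length := List.length_pos_iff.mpr (hf _)
    exact substSeq_getD f hf (shift a) n (n - (f (a 0)).length) (by omega)

lemma wordThen_one (c : ℕ) (s : ℕ → ℕ) : wordThen [c] s = consSeq c s := by
  funext n
  cases n with
  | zero => simp [wordThen, consSeq]
  | succ m => simp [wordThen, consSeq]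

lemma wordThen_two (c d : ℕ) (s : ℕ → ℕ) :
    wordThen [c, d] s = consSeq c (consSeq d s) := by
  funext n
  match n with
  | 0 => simp [wordThen, consSeq]
  | 1 => simp [wordThen, consSeq]
  | (m + 2) => simp [wordThen, consSeq]

lemma substBlock0_ne (c : ℕ) : substBlock0 c ≠ [] := by
  by_cases hc : c = 0 <;> simp [substBlock0, hc]

lemma U0seq_cons0 {w : ℕ → ℕ} (h : w 0 = 0) :
    U0seq w = consSeq 0 (U0seq (shift w)) := by
  show substSeq substBlock0 w = _
  rw [substSeq_cons _ substBlock0_ne, h,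
    show substBlock0 0 = [0] from by simp [substBlock0], wordThen_one]
  rfl

lemma U0seq_cons1 {w : ℕ → ℕ} (h : w 0 = 1) :
    U0seq w = consSeq 0 (consSeq 1 (U0seq (shift w))) := by
  show substSeq substBlock0 w = _
  rw [substSeq_cons _ substBlock0_ne, h,
    show substBlock0 1 = [0, 1] from by simp [substBlock0], wordThen_two]
  rfl

lemma U0seq_zero (w : ℕ → ℕ) : U0seq w 0 = 0 := by
  show substSeq substBlock0 w 0 = 0
  rw [substSeq_cons _ substBlock0_ne]
  by_cases h : w 0 = 0 <;> simp [wordThen, substBlock0, h]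

lemma U0_lt_aux : ∀ m (x y : ℕ → ℕ), (∀ i, x i ≤ 1) → (∀ i, y i ≤ 1) →
    (∀ i < m, x i = y i) → x m < y m → seqLt (U0seq x) (U0seq y) := by
  intro m
  induction m with
  | zero =>
    intro x y hx hy _ hlt
    have hy0 := hy 0
    have hx0 : x 0 = 0 := by omega
    have hy0' : y 0 = 1 := by omega
    rw [U0seq_cons0 hx0, U0seq_cons1 hy0']
    refine seqLt_cons_iff.mpr ?_
    exact ⟨0, fun i hi => absurd hi (by omega), by rw [U0seq_zero]; simp [consSeq]⟩
  | succ m ih =>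
    intro x y hx hy heq hlt
    have h0 : x 0 = y 0 := heq 0 (by omega)
    have hih : seqLt (U0seq (shift x)) (U0seq (shift y)) :=
      ih (shift x) (shift y) (fun i => hx (i + 1)) (fun i => hy (i + 1))
        (fun i hi => heq (i + 1) (by omega)) hlt
    rcases Nat.le_one_iff_eq_zero_or_eq_one.mp (hx 0) with h | h
    · rw [U0seq_cons0 h, U0seq_cons0 (show y 0 = 0 by omega)]
      exact seqLt_cons_iff.mpr hih
    · rw [U0seq_cons1 h, U0seq_cons1 (show y 0 = 1 by omega)]
      exact seqLt_cons_iff.mpr (seqLt_cons_iff.mpr hih)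

lemma U0_lt {x y : ℕ → ℕ} (hx : ∀ i, x i ≤ 1) (hy : ∀ i, y i ≤ 1)
    (h : seqLt x y) : seqLt (U0seq x) (U0seq y) := by
  obtain ⟨m, h1, h2⟩ := h
  exact U0_lt_aux m x y hx hy h1 h2

lemma U0_le {x y : ℕ → ℕ} (hx : ∀ i, x i ≤ 1) (hy : ∀ i, y i ≤ 1)
    (h : seqLe x y) : seqLe (U0seq x) (U0seq y) := by
  rcases h with h | rfl
  · exact Or.inl (U0_lt hx hy h)
  · exact Or.inr rfl

lemma U0_le_rev {x y : ℕ → ℕ} (hx : ∀ i, x i ≤ 1) (hy : ∀ i, y i ≤ 1)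
    (h : seqLe (U0seq x) (U0seq y)) : seqLe x y := by
  rcases seq_trichotomy x y with h' | h' | h'
  · exact Or.inl h'
  · exact Or.inr h'
  · exfalso
    have hlt := U0_lt hy hx h'
    rcases h with h | h
    · exact seqLt_asymm h hlt
    · rw [h] at hlt
      exact seqLt_irrefl _ hlt

lemma qg_head {β : ℝ} {a : ℕ → ℕ} (ha : IsQuasiGreedy β a) : a 0 = 1 := by
  obtain ⟨hd, -, hqg⟩ := ha
  by_contra h
  have h0 : a 0 = 0 := by have := hd 0; omega
  obtain ⟨hpos, hle⟩ := hqg 1 le_rfl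
  rcases hle with hlt | heq
  · obtain ⟨m, h1, h2⟩ := hlt
    have hzero : ∀ i, i ≤ m → a i = 0 := by
      intro i
      induction i with
      | zero => intro _; exact h0
      | succ j ihj =>
        intro hi
        have hj : a (j + 1) = a j := h1 j (by omega)
        rw [hj]
        exact ihj (by omega)
    have h2' : a (m + 1) < a m := h2
    have := hzero m le_rfl
    omega
  · have hconst : ∀ i, a i = 0 := by
      intro i
      induction i with
      | zero => exact h0
      | succ j ihj =>
        have hj : a (j + 1) = a j := congrFun heq j
        rw [hj]; exact ihj
    obtain ⟨n, -, h2⟩ := hpos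
    have h2' : (0 : ℕ) < a (n + 1) := h2
    have := hconst (n + 1)
    omega

lemma iter_shift_cons (u : ℕ → ℕ) (k : ℕ) :
    shift^[k] u = consSeq (u k) (shift^[k + 1] u) := by
  rw [Function.iterate_succ_apply']
  conv_lhs => rw [← consSeq_head_shift (shift^[k] u)]
  congr 1
  rw [shift_iter]
  simp

lemma iter_shift_head (u : ℕ → ℕ) (k : ℕ) : (shift^[k] u) 0 = u k := by
  rw [shift_iter]
  simp

lemma exists_boundary (z' : ℕ → ℕ) (hz' : ∀ i, z' i ≤ 1) (k : ℕ) :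
    ∃ n, shift^[n] (U0seq z') = U0seq (shift^[k] z') := by
  induction k with
  | zero => exact ⟨0, rfl⟩
  | succ k ih =>
    obtain ⟨n, hn⟩ := ih
    have hdig : (shift^[k] z') 0 = z' k := iter_shift_head z' k
    rcases Nat.le_one_iff_eq_zero_or_eq_one.mp (hz' k) with h | h
    · refine ⟨n + 1, ?_⟩
      rw [Function.iterate_succ_apply', hn, U0seq_cons0 (by rw [hdig]; exact h),
        shift_consSeq, shift_iter_succ]
    · refine ⟨n + 2, ?_⟩
      rw [show n + 2 = (n + 1) + 1 from rfl, Function.iterate_succ_apply',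
        Function.iterate_succ_apply', hn, U0seq_cons1 (by rw [hdig]; exact h),
        shift_consSeq, shift_consSeq, shift_iter_succ]

lemma shift_form (z' : ℕ → ℕ) (hz' : ∀ i, z' i ≤ 1) (n : ℕ) :
    (∃ k, shift^[n] (U0seq z') = U0seq (shift^[k] z')) ∨
    (∃ k, z' k = 1 ∧ shift^[n] (U0seq z') = consSeq 1 (U0seq (shift^[k + 1] z'))) := by
  induction n with
  | zero => exact Or.inl ⟨0, rfl⟩
  | succ n ih =>
    rcases ih with ⟨k, hk⟩ | ⟨k, hk1, hk⟩
    · have hdig : (shift^[k] z') 0 = z' k := iter_shift_head z' k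
      rcases Nat.le_one_iff_eq_zero_or_eq_one.mp (hz' k) with h | h
      · left
        refine ⟨k + 1, ?_⟩
        rw [Function.iterate_succ_apply', hk, U0seq_cons0 (by rw [hdig]; exact h),
          shift_consSeq, shift_iter_succ]
      · right
        refine ⟨k, h, ?_⟩
        rw [Function.iterate_succ_apply', hk, U0seq_cons1 (by rw [hdig]; exact h),
          shift_consSeq, shift_iter_succ]
    · left
      refine ⟨k + 1, ?_⟩
      rw [Function.iterate_succ_apply', hk, shift_consSeq]

end UB0aux

open UB0aux

/-- If `0α(β) = U_0(α(β̂))` and `z = U_0(ẑ)`, then `σ^n(z) ≼ α(β)` for all `n ≥ 0`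
iff `σ^k(ẑ) ≼ α(β̂)` for all `k ≥ 0`. -/
theorem upper_bound_equivalence_U0 (β β' : ℝ)
    (hβ : β ∈ Set.Ioc (1 : ℝ) 2) (hβ' : β' ∈ Set.Ioc (1 : ℝ) 2)
    (a a' : ℕ → ℕ) (ha : IsQuasiGreedy β a) (ha' : IsQuasiGreedy β' a')
    (hrel : consSeq 0 a = U0seq a')
    (z z' : ℕ → ℕ) (hz' : ∀ i, z' i ≤ 1) (hz : z = U0seq z') :
    (∀ n : ℕ, seqLe (shift^[n] z) a) ↔ (∀ k : ℕ, seqLe (shift^[k] z') a') := by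
  subst hz
  have hd : ∀ i, a i ≤ 1 := ha.1
  have hd' : ∀ i, a' i ≤ 1 := ha'.1
  have ha0 : a 0 = 1 := qg_head ha
  have ha'0 : a' 0 = 1 := qg_head ha'
  have hkey : a = consSeq 1 (U0seq (shift a')) := by
    rw [U0seq_cons1 ha'0] at hrel
    exact consSeq_tail_inj hrel
  have ha'cons : a' = consSeq 1 (shift a') := by
    conv_lhs => rw [← consSeq_head_shift a', ha'0]
  have hshiftd : ∀ (u : ℕ → ℕ), (∀ i, u i ≤ 1) → ∀ k i, (shift^[k] u) i ≤ 1 := by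
    intro u hu k i
    rw [shift_iter]
    exact hu _
  constructor
  · intro H k
    rcases Nat.le_one_iff_eq_zero_or_eq_one.mp (hz' k) with h | h
    · refine Or.inl ?_
      rw [iter_shift_cons z' k, h]
      conv_rhs => rw [ha'cons]
      exact seqLt_cons01 _ _
    · obtain ⟨n, hn⟩ := exists_boundary z' hz' k
      have hhead : (shift^[k] z') 0 = 1 := by rw [iter_shift_head]; exact h
      have hform : shift^[n + 1] (U0seq z') = consSeq 1 (U0seq (shift^[k + 1] z')) := by
        rw [Function.iterate_succ_apply', hn, U0seq_cons1 hhead, shift_consSeq,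
          shift_iter_succ]
      have hH := H (n + 1)
      rw [hform, hkey] at hH
      have h2 : seqLe (U0seq (shift^[k + 1] z')) (U0seq (shift a')) := seqLe_cons_iff.mp hH
      have h3 : seqLe (shift^[k + 1] z') (shift a') :=
        U0_le_rev (fun i => hshiftd z' hz' (k + 1) i) (fun i => hd' (i + 1)) h2
      rw [iter_shift_cons z' k, h, ha'cons]
      exact seqLe_cons_iff.mpr h3
  · intro H' n
    rcases shift_form z' hz' n with ⟨k, hk⟩ | ⟨k, hk1, hk⟩
    · have h2 : seqLe (U0seq (shift^[k] z')) (U0seq a') :=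
        U0_le (fun i => hshiftd z' hz' k i) hd' (H' k)
      have h3 : seqLt (U0seq a') a := by
        rw [← hrel]
        conv_rhs => rw [← consSeq_head_shift a, ha0]
        exact seqLt_cons01 _ _
      rw [hk]
      exact seqLe_trans h2 (Or.inl h3)
    · have h1 := H' k
      rw [iter_shift_cons z' k, hk1, ha'cons] at h1
      have h2 : seqLe (shift^[k + 1] z') (shift a') := seqLe_cons_iff.mp h1
      have h3 : seqLe (U0seq (shift^[k + 1] z')) (U0seq (shift a')) :=
        U0_le (fun i => hshiftd z' hz' (k + 1) i) (fun i => hd' (i + 1)) h2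
      rw [hk, hkey]
      exact seqLe_cons_iff.mpr h3


end
end

section
/- Let β ∈ (1,2]. If a word v is Lyndon but not β-Lyndon, then no word extending v is β-Lyndon; that is, for every word w having v as a prefix, w is not β-Lyndon. -/
open scoped Classical ENNReal
open MeasureTheory Filter

noncomputable section

/-! ### Auxiliary lemmas -/

lemma shift_iter (a : ℕ → ℕ) (m n : ℕ) : shift^[m] a n = a (n + m) := by
  induction m generalizing n with
  | zero => rfl
  | succ m ih =>
    rw [Function.iterate_succ_apply']
    show shift^[m] a (n + 1) = a (n + (m + 1))
    rw [ih]
    congr 1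
    omega

lemma periodic_mod (w : List ℕ) (n m : ℕ) :
    periodic w (n + m) = periodic w (n + m % w.length) := by
  show w.getD ((n + m) % w.length) 0 = w.getD ((n + m % w.length) % w.length) 0
  rw [Nat.add_mod, Nat.add_mod n (m % w.length), Nat.mod_mod_of_dvd m dvd_rfl]

lemma shift_periodic_mod (w : List ℕ) (m : ℕ) :
    shift^[m] (periodic w) = shift^[m % w.length] (periodic w) :=
  funext fun n => by rw [shift_iter, shift_iter, periodic_mod]

lemma shift_periodic_len (w : List ℕ) :
    shift^[w.length] (periodic w) = periodic w := by
  rw [shift_periodic_mod, Nat.mod_self, Function.iterate_zero_apply]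

lemma periodic_rotate (w : List ℕ) (hw : 0 < w.length) (k : ℕ) :
    periodic (w.rotate k) = shift^[k] (periodic w) := by
  funext n
  rw [shift_iter]
  unfold periodic
  rw [List.length_rotate]
  have h1 : n % w.length < (w.rotate k).length := by
    rw [List.length_rotate]; exact Nat.mod_lt _ hw
  rw [List.getD_eq_getElem _ _ h1, List.getElem_rotate,
      List.getD_eq_getElem _ _ (Nat.mod_lt _ hw)]
  congr 1
  rw [Nat.add_mod n k, Nat.add_mod (n % w.length) k,
      Nat.mod_mod_of_dvd n dvd_rfl]

lemma lex_exists {w r : List ℕ} (h : List.Lex (· < ·) w r) (hlen : w.length = r.length) :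
    ∃ i < w.length, (∀ j < i, w.getD j 0 = r.getD j 0) ∧ w.getD i 0 < r.getD i 0 := by
  induction h with
  | nil => simp at hlen
  | @cons a l₁ l₂ h ih =>
    obtain ⟨i, hi, hagree, hlt⟩ := ih (by simpa using hlen)
    refine ⟨i + 1, by simpa using hi, fun j hj => ?_, by simpa using hlt⟩
    cases j with
    | zero => simp
    | succ j => simpa using hagree j (by omega)
  | @rel a₁ l₁ a₂ l₂ h =>
    exact ⟨0, by simp, fun j hj => absurd hj (by omega), by simpa using h⟩

lemma seqLt_trans {x y z : ℕ → ℕ} (h1 : seqLt x y) (h2 : seqLt y z) : seqLt x z := by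
  obtain ⟨m, hm, hm'⟩ := h1
  obtain ⟨n, hn, hn'⟩ := h2
  refine ⟨min m n, fun j hj => ?_, ?_⟩
  · rw [hm j (lt_of_lt_of_le hj (min_le_left _ _)), hn j (lt_of_lt_of_le hj (min_le_right _ _))]
  · rcases lt_trichotomy m n with h | h | h
    · rw [min_eq_left h.le]; exact lt_of_lt_of_eq hm' (hn m h)
    · subst h; rw [min_self]; exact lt_trans hm' hn'
    · rw [min_eq_right h.le, hm n h]; exact hn'

lemma seqLt_of_le_of_lt {x y z : ℕ → ℕ} (h1 : seqLe x y) (h2 : seqLt y z) : seqLt x z :=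
  h1.elim (fun h => seqLt_trans h h2) (fun h => h ▸ h2)

lemma seqLt_of_lt_of_le {x y z : ℕ → ℕ} (h1 : seqLt x y) (h2 : seqLe y z) : seqLt x z :=
  h2.elim (fun h => seqLt_trans h1 h) (fun h => h ▸ h1)

lemma seqLe_of_not_lt {x y : ℕ → ℕ} (h : ¬ seqLt x y) : seqLe y x := by
  by_cases hxy : y = x
  · exact Or.inr hxy
  · have hne : ∃ n, x n ≠ y n := by
      by_contra h'
      push_neg at h'
      exact hxy (funext fun n => (h' n).symm)
    have hspec := Nat.find_spec hne
    have hmin : ∀ j < Nat.find hne, x j = y j := fun j hj => not_not.mp (Nat.find_min hne hj)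
    rcases lt_or_gt_of_ne hspec with hlt | hgt
    · exact absurd ⟨Nat.find hne, hmin, hlt⟩ h
    · exact Or.inl ⟨Nat.find hne, fun j hj => (hmin j hj).symm, hgt⟩

lemma seqLt_shift {x y : ℕ → ℕ} {k : ℕ} (h : seqLt x y) (hag : ∀ j < k, x j = y j) :
    seqLt (shift^[k] x) (shift^[k] y) := by
  obtain ⟨n, hn, hn'⟩ := h
  have hkn : k ≤ n := by
    by_contra hc
    push_neg at hc
    exact absurd (hag n hc) (ne_of_lt hn')
  refine ⟨n - k, fun j hj => ?_, ?_⟩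
  · rw [shift_iter, shift_iter]; exact hn _ (by omega)
  · rw [shift_iter, shift_iter]
    have h' : n - k + k = n := by omega
    rw [h']; exact hn'

lemma not_seqLt_of_selfshift {x y : ℕ → ℕ} {L : ℕ} (hL : 0 < L)
    (hag : ∀ j < L, x j = y j) (h2 : seqLe x (shift^[L] x))
    (h3 : ∀ n, y (n + L) = y n) : ¬ seqLt x y := by
  have key : ∀ n, ¬ ((∀ j < n, x j = y j) ∧ x n < y n) := by
    intro n
    induction n using Nat.strong_induction_on with
    | _ n IH =>
      rintro ⟨hn, hn'⟩
      have hLn : L ≤ n := by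
        by_contra hc
        push_neg at hc
        exact absurd (hag n hc) (ne_of_lt hn')
      have hs : ∀ j < n - L, x (j + L) = y j := fun j hj => by
        rw [← h3 j]; exact hn _ (by omega)
      have hsn : x n < y (n - L) := by
        rw [← h3 (n - L), Nat.sub_add_cancel hLn]; exact hn'
      rcases h2 with hlt | heq
      · obtain ⟨m, hm, hm'⟩ := hlt
        rw [shift_iter] at hm'
        rcases lt_trichotomy m (n - L) with h | h | h
        · refine absurd ⟨fun j hj => ?_, ?_⟩ (IH m (by omega))
          · rw [hm j hj, shift_iter]; exact hs j (by omega)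
          · exact lt_of_lt_of_eq hm' (hs m h)
        · refine absurd ⟨fun j hj => ?_, ?_⟩ (IH (n - L) (by omega))
          · rw [hm j (by omega), shift_iter]; exact hs j hj
          · calc x (n - L) < x (n - L + L) := by rw [← h]; exact hm'
              _ < y (n - L) := by rw [Nat.sub_add_cancel hLn]; exact hsn
        · refine absurd ⟨fun j hj => ?_, ?_⟩ (IH (n - L) (by omega))
          · rw [hm j (by omega), shift_iter]; exact hs j hj
          · have hx : x (n - L) = x (n - L + L) := by
              rw [hm (n - L) h, shift_iter]
            rw [hx, Nat.sub_add_cancel hLn]; exact hsn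
      · refine absurd ⟨fun j hj => ?_, ?_⟩ (IH (n - L) (by omega))
        · have hx : x j = x (j + L) := by
            have := congrFun heq j
            rwa [shift_iter] at this
          rw [hx]; exact hs j hj
        · have hx : x (n - L) = x (n - L + L) := by
            have := congrFun heq (n - L)
            rwa [shift_iter] at this
          rw [hx, Nat.sub_add_cancel hLn]; exact hsn
  rintro ⟨n, hn, hn'⟩
  exact key n ⟨hn, hn'⟩

lemma lyndon_seqLe (w : List ℕ) (hw : IsLyndon w) (k : ℕ) :
    seqLe (periodic w) (shift^[k] (periodic w)) := by
  obtain ⟨hlen, -, hrot⟩ := hw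
  have hM : 0 < w.length := by omega
  rw [shift_periodic_mod w]
  set k' := k % w.length with hk'
  rcases Nat.eq_zero_or_pos k' with h0 | hpos
  · rw [h0, Function.iterate_zero_apply]; exact Or.inr rfl
  · have hk'M : k' < w.length := Nat.mod_lt _ hM
    have hlex := hrot k' hpos hk'M
    obtain ⟨i, hiM, hagree, hlt⟩ := lex_exists hlex (List.length_rotate w k').symm
    left
    rw [← periodic_rotate w hM]
    refine ⟨i, fun j hj => ?_, ?_⟩
    · unfold periodic
      rw [List.length_rotate, Nat.mod_eq_of_lt (show j < w.length by omega)]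
      exact hagree j hj
    · unfold periodic
      rw [List.length_rotate, Nat.mod_eq_of_lt hiM]
      exact hlt

/-- If a word `v` is Lyndon but not `β`-Lyndon, then no word extending `v`
(i.e. having `v` as a prefix) is `β`-Lyndon. -/
theorem no_beta_Lyndon_extension (β : ℝ) (hβ : β ∈ Set.Ioc (1 : ℝ) 2)
    (a : ℕ → ℕ) (ha : IsQuasiGreedy β a)
    (v : List ℕ) (hv : IsLyndon v) (hnb : ¬ IsBetaLyndon a v) :
    ∀ w : List ℕ, v <+: w → ¬ IsBetaLyndon a w := by
  intro w hpre hwB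
  obtain ⟨hwLyn, hwAll⟩ := hwB
  have hex : ∃ n : ℕ, ¬ seqLt (shift^[n] (periodic v)) a := by
    by_contra hc
    push_neg at hc
    exact hnb ⟨hv, hc⟩
  obtain ⟨n, hn⟩ := hex
  have hL : 0 < v.length := by have := hv.1; omega
  have hM : 0 < w.length := by have := hwLyn.1; omega
  have hLM : v.length ≤ w.length := hpre.length_le
  set L := v.length with hLdef
  set n₀ := n % L with hn₀def
  have hn₀ : n₀ < L := Nat.mod_lt _ hL
  have ha2 : seqLe a (shift^[n₀] (periodic v)) := by
    have h := seqLe_of_not_lt hn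
    rwa [shift_periodic_mod v] at h
  have hw2 : seqLt (shift^[n₀] (periodic w)) a := hwAll n₀
  have hwv : seqLt (shift^[n₀] (periodic w)) (shift^[n₀] (periodic v)) :=
    seqLt_of_lt_of_le hw2 ha2
  have hpref : ∀ j < L, w.getD j 0 = v.getD j 0 := by
    obtain ⟨t, ht⟩ := hpre
    intro j hj
    rw [← ht, List.getD_append _ _ _ _ hj]
  have hperiodAg : ∀ j < L, periodic w j = periodic v j := fun j hj => by
    unfold periodic
    rw [Nat.mod_eq_of_lt (lt_of_lt_of_le hj hLM), Nat.mod_eq_of_lt hj]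
    exact hpref j hj
  have hag : ∀ j < L - n₀, (shift^[n₀] (periodic w)) j = (shift^[n₀] (periodic v)) j := by
    intro j hj
    rw [shift_iter, shift_iter]
    exact hperiodAg (j + n₀) (by omega)
  have hB0 := seqLt_shift hwv hag
  rw [← Function.iterate_add_apply, ← Function.iterate_add_apply] at hB0
  have hsum : L - n₀ + n₀ = L := by omega
  rw [hsum] at hB0
  have hvper : shift^[L] (periodic v) = periodic v := shift_periodic_len v
  rw [hvper] at hB0
  have hC : seqLt (periodic w) (periodic v) :=
    seqLt_of_le_of_lt (lyndon_seqLe w hwLyn L) hB0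
  exact not_seqLt_of_selfshift hL hperiodAg (lyndon_seqLe w hwLyn L)
    (fun m => by
      have h := congrFun hvper m
      rwa [shift_iter] at h) hC

end
end
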